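/- arXiv:1304.4463 — 8 statements merged into one kernel-verified Lean document; each statement's English description precedes it below -/
import Mathlib

section
/- Let p ≥ 1 and define x_e = 2(p+e)(2p+1)(2p+2)⋯(2p+e-1)/e! for e ≥ 1, x_0 = 1. Define f_p : ℤ → ℤ by f_p(u) = 0 if |u| < p and f_p(u) = x_{|u|-p} if |u| ≥ p. Then for every integer u, f_p(u) = (2/(2p)!) · ∏_{k=0}^{p-1} (u² - k²). -/
open Nat

lemma asc_prod_range (n : ℕ) : ∀ m, n.ascFactorial m = ∏ i ∈ Finset.range m, (n + i)
  | 0 => rfl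
  | m + 1 => by
      rw [Nat.ascFactorial_succ, Finset.prod_range_succ, asc_prod_range n m, mul_comm]

lemma icc_prod_asc (p : ℕ) : ∀ m, (∏ k ∈ Finset.Icc 1 m, ((2 * p + k : ℕ) : ℚ))
    = ((2 * p + 1).ascFactorial m : ℚ)
  | 0 => by simp
  | m + 1 => by
      rw [Finset.prod_Icc_succ_top (by omega), icc_prod_asc p m, Nat.ascFactorial_succ]
      push_cast
      ring

lemma sq_prod (n p : ℕ) (hpn : p ≤ n) :
    ∏ k ∈ Finset.range p, ((n : ℚ) ^ 2 - (k : ℚ) ^ 2)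
      = (n.descFactorial p : ℚ) * (n.ascFactorial p : ℚ) := by
  rw [Nat.descFactorial_eq_prod_range, asc_prod_range]
  push_cast
  rw [← Finset.prod_mul_distrib]
  apply Finset.prod_congr rfl
  intro k hk
  have hk' : k ≤ n := le_trans (le_of_lt (Finset.mem_range.mp hk)) hpn
  rw [Nat.cast_sub hk']
  ring

theorem stmt2 (p : ℕ) (hp : 1 ≤ p)
    (x : ℕ → ℚ) (hx0 : x 0 = 1)
    (hx : ∀ e, 1 ≤ e → x e =
      2 * (p + e) * (∏ k ∈ Finset.Icc 1 (e - 1), ((2 * p + k : ℕ) : ℚ)) /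
        (Nat.factorial e))
    (f : ℤ → ℚ)
    (hf : ∀ u : ℤ, f u = if |u| < (p : ℤ) then 0 else x (|u| - p).toNat)
    (u : ℤ) :
    f u = 2 / (Nat.factorial (2 * p)) *
      ∏ k ∈ Finset.range p, ((u ^ 2 - (k : ℤ) ^ 2 : ℤ) : ℚ) := by
  rw [hf u]
  split_ifs with h
  · -- |u| < p : the product vanishes at k = |u|.toNat
    have hmem : |u|.toNat ∈ Finset.range p := by
      rw [Finset.mem_range]; omega
    have hz : ∏ k ∈ Finset.range p, ((u ^ 2 - (k : ℤ) ^ 2 : ℤ) : ℚ) = 0 := by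
      apply Finset.prod_eq_zero hmem
      have : ((|u|.toNat : ℤ)) = |u| := Int.toNat_of_nonneg (abs_nonneg u)
      rw [this]
      have : u ^ 2 = |u| ^ 2 := (sq_abs u).symm
      rw [this]
      push_cast
      ring
    rw [hz, mul_zero]
  · push_neg at h
    set e : ℕ := (|u| - p).toNat with he
    have hue : |u| = (p : ℤ) + e := by omega
    clear_value e
    have hu2 : u ^ 2 = ((p + e : ℕ) : ℤ) ^ 2 := by
      rw [← sq_abs u, hue]; push_cast; ring
    have hprod : ∏ k ∈ Finset.range p, ((u ^ 2 - (k : ℤ) ^ 2 : ℤ) : ℚ)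
        = ∏ k ∈ Finset.range p, (((p + e : ℕ) : ℚ) ^ 2 - (k : ℚ) ^ 2) := by
      apply Finset.prod_congr rfl
      intro k _
      rw [hu2]; push_cast; ring
    rw [hprod, sq_prod (p + e) p (by omega)]
    have hD : e ! * (p + e).descFactorial p = (p + e)! := by
      have := Nat.factorial_mul_descFactorial (show p ≤ p + e by omega)
      simpa [Nat.add_sub_cancel_left] using this
    have hA : (p + e - 1)! * (p + e).ascFactorial p = (p + e + p - 1)! :=
      Nat.factorial_mul_ascFactorial' _ _ (by omega)
    have hfac : ((2 * p).factorial : ℚ) ≠ 0 := by positivity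
    rcases Nat.eq_zero_or_pos e with he0 | he1
    · subst he0
      rw [hx0]
      have h2p : (2 * p)! = 2 * ((p : ℕ)! * p.ascFactorial p) := by
        have h1 : (p - 1)! * p.ascFactorial p = (2 * p - 1)! := by
          have := Nat.factorial_mul_ascFactorial' p p (by omega)
          convert this using 3 <;> omega
        have h2 : (p : ℕ)! = p * (p - 1)! := by
          rw [Nat.mul_factorial_pred (by omega)]
        have h3 : (2 * p)! = 2 * p * (2 * p - 1)! := by
          rw [Nat.mul_factorial_pred (by omega)]
        rw [h3, ← h1, h2]; ring
      have hD0 : (p + 0).descFactorial p = (p : ℕ)! := by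
        simp [Nat.descFactorial_self]
      rw [hD0]
      rw [show p + 0 = p from rfl]
      field_simp
      rw [h2p]
      push_cast
      ring
    · rw [hx e he1, icc_prod_asc]
      have hA' : (2 * p)! * (2 * p + 1).ascFactorial (e - 1) = (2 * p + (e - 1))! := by
        exact Nat.factorial_mul_ascFactorial (2 * p) (e - 1)
      -- key natural-number identity, multiplied by (p+e-1)!
      have key : (p + e - 1)! * ((p + e) * ((2 * p)! * (2 * p + 1).ascFactorial (e - 1)))
          = (p + e - 1)! * ((p + e).descFactorial p * (p + e).ascFactorial p * e !) := by
        rw [hA']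
        have h1 : (p + e) * (p + e - 1)! = (p + e)! := Nat.mul_factorial_pred (by omega)
        have h2 : 2 * p + (e - 1) = p + e + p - 1 := by omega
        calc (p + e - 1)! * ((p + e) * (2 * p + (e - 1))!)
            = ((p + e) * (p + e - 1)!) * (2 * p + (e - 1))! := by ring
          _ = (p + e)! * (p + e + p - 1)! := by rw [h1, h2]
          _ = (e ! * (p + e).descFactorial p) * ((p + e - 1)! * (p + e).ascFactorial p) := by
              rw [hD, hA]
          _ = (p + e - 1)! * ((p + e).descFactorial p * (p + e).ascFactorial p * e !) := by ring
      have hpe1 : ((p + e - 1)! : ℚ) ≠ 0 := by positivity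
      have hef : ((e ! : ℕ) : ℚ) ≠ 0 := by positivity
      have keyQ : ((p + e : ℕ) : ℚ) * ((2 * p)! : ℚ) * ((2 * p + 1).ascFactorial (e - 1) : ℚ)
          = ((p + e).descFactorial p : ℚ) * ((p + e).ascFactorial p : ℚ) * (e ! : ℚ) := by
        have hc := congrArg (fun n : ℕ => (n : ℚ)) key
        push_cast at hc
        apply mul_left_cancel₀ hpe1
        push_cast
        linarith [hc]
      field_simp
      push_cast
      push_cast at keyQ
      linarith [keyQ]
end

section
/- Let p ≥ 1 and let x_e (e ≥ 0) be defined by x_0 = 1, x_e = 2(p+e)(2p+1)⋯(2p+e-1)/e! for e ≥ 1, and let l_j = binom(2p+1,j). Then for every h with p+1 ≤ h ≤ 2p, ∑_{i=0}^{h-p} (-1)^i (l_0 + l_1 + ⋯ + l_i) x_{h-i-p} = 0. -/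
/-!
The generating function of `x` is `(1 + X) / (1 - X) ^ (2p + 1)`, while that of the
alternating partial sums `(-1) ^ i * (l₀ + ⋯ + lᵢ)` is `(1 - X) ^ (2p + 1) / (1 + X)`.
Their product is `1`, and the sum in question is its coefficient of `X ^ (h - p)`, `h - p ≥ 1`.
-/

open PowerSeries Finset

theorem PowerSeries.coeff_one_sub_X_pow {R : Type*} [CommRing R] (n k : ℕ) :
    coeff k ((1 - X : R⟦X⟧) ^ n) = (-1) ^ k * n.choose k := by
  have : (1 - X : R⟦X⟧) ^ n =
      rescale (-1) (((1 + Polynomial.X) ^ n : Polynomial R) : R⟦X⟧) := by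
    simp [sub_eq_add_neg]
  rw [this, coeff_rescale, Polynomial.coeff_coe, Polynomial.coeff_one_add_X_pow]

theorem one_add_X_mul_mk_alternating_sum_choose {R : Type*} [CommRing R] (n : ℕ) :
    (1 + X : R⟦X⟧) * mk (fun i => (-1) ^ i * ∑ j ∈ range (i + 1), (n.choose j : R)) =
      (1 - X) ^ n := by
  ext (_ | k)
  · simp [coeff_one_sub_X_pow]
  · rw [add_mul, one_mul, map_add, coeff_succ_X_mul, coeff_mk, coeff_mk, coeff_one_sub_X_pow,
      sum_range_succ _ (k + 1)]
    ring

theorem Nat.add_one_mul_choose_succ_add_choose (d e : ℕ) :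
    (e + 1) * ((d + (e + 1)).choose (e + 1) + (d + e).choose e) =
      (d + 2 * (e + 1)) * (d + e).choose e := by
  have := Nat.add_one_mul_choose_eq (d + e) e
  rw [← add_assoc]
  nlinarith

theorem Nat.prod_Icc_add_eq_ascFactorial (d e : ℕ) :
    ∏ k ∈ Icc 1 e, (d + k) = (d + 1).ascFactorial e := by
  induction e with
  | zero => simp
  | succ e ih =>
    rw [prod_Icc_succ_top (by omega), ih, Nat.ascFactorial_succ]
    ring

theorem add_two_mul_prod_Icc_add_div_factorial {K : Type*} [Field K] [CharZero K] (d e : ℕ) :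
    ((d + 2 * (e + 1) : ℕ) : K) * (∏ k ∈ Icc 1 e, ((d + k : ℕ) : K)) / (e + 1).factorial =
      (d + (e + 1)).choose d + (d + e).choose d := by
  have key : ((e + 1 : ℕ) : K) * ((d + (e + 1)).choose (e + 1) + (d + e).choose e) =
      (d + 2 * (e + 1) : ℕ) * (d + e).choose e :=
    mod_cast Nat.add_one_mul_choose_succ_add_choose d e
  rw [← Nat.cast_prod, Nat.prod_Icc_add_eq_ascFactorial, Nat.ascFactorial_eq_factorial_mul_choose,
    Nat.choose_symm_add, Nat.choose_symm_add, Nat.factorial_succ]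
  push_cast at key ⊢
  rw [div_eq_iff (mul_ne_zero e.cast_add_one_ne_zero (Nat.cast_ne_zero.2 e.factorial_ne_zero))]
  linear_combination (e.factorial : K) * key.symm

theorem mk_eq_one_add_X_mul_invOneSubPow {R : Type*} [CommRing R] {d : ℕ} {x : ℕ → R}
    (hx0 : x 0 = 1) (hx : ∀ e, x (e + 1) = (d + (e + 1)).choose d + (d + e).choose d) :
    mk x = (1 + X) * (invOneSubPow R (d + 1)).val := by
  ext (_ | e)
  · simp [hx0, invOneSubPow_val_succ_eq_mk_add_choose]
  · rw [invOneSubPow_val_succ_eq_mk_add_choose, add_mul, one_mul, map_add, coeff_succ_X_mul,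
      coeff_mk, coeff_mk, coeff_mk, hx]

theorem sum_range_mul_eq_zero_of_mk_mul_mk_eq_one {R : Type*} [CommRing R] {a b : ℕ → R}
    (hab : mk a * mk b = 1) {n : ℕ} (hn : n ≠ 0) :
    ∑ i ∈ range (n + 1), a i * b (n - i) = 0 := by
  have := congrArg (coeff n) hab
  rw [coeff_mul,
    Nat.sum_antidiagonal_eq_sum_range_succ (fun i j => coeff i (mk a) * coeff j (mk b)),
    coeff_one, if_neg hn] at this
  simpa only [coeff_mk] using this

theorem stmt6_general (p : ℕ)
    (x : ℕ → ℚ) (hx0 : x 0 = 1)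
    (hx : ∀ e, 1 ≤ e → x e =
      2 * (p + e) * (∏ k ∈ Finset.Icc 1 (e - 1), ((2 * p + k : ℕ) : ℚ)) /
        (Nat.factorial e))
    (h : ℕ) (h1 : p + 1 ≤ h) :
    ∑ i ∈ Finset.range (h - p + 1),
      (-1 : ℚ) ^ i * (∑ j ∈ Finset.range (i + 1), (Nat.choose (2 * p + 1) j : ℚ)) *
        x (h - i - p) = 0 := by
  have hxe (e : ℕ) :
      x (e + 1) = (2 * p + (e + 1)).choose (2 * p) + (2 * p + e).choose (2 * p) := by
    rw [hx (e + 1) (by omega), ← add_two_mul_prod_Icc_add_div_factorial, Nat.add_sub_cancel]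
    push_cast
    ring
  have hinv : mk (fun i => (-1) ^ i * ∑ j ∈ range (i + 1), ((2 * p + 1).choose j : ℚ)) *
      mk x = 1 := by
    rw [mk_eq_one_add_X_mul_invOneSubPow hx0 hxe, ← mul_assoc, mul_comm _ (1 + X),
      one_add_X_mul_mk_alternating_sum_choose, ← invOneSubPow_inv_eq_one_sub_pow]
    exact (invOneSubPow ℚ (2 * p + 1)).inv_val
  rw [← sum_range_mul_eq_zero_of_mk_mul_mk_eq_one hinv (by omega : h - p ≠ 0)]
  refine sum_congr rfl fun i _ => ?_
  rw [Nat.sub_right_comm]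

theorem stmt6 (p : ℕ) (hp : 1 ≤ p)
    (x : ℕ → ℚ) (hx0 : x 0 = 1)
    (hx : ∀ e, 1 ≤ e → x e =
      2 * (p + e) * (∏ k ∈ Finset.Icc 1 (e - 1), ((2 * p + k : ℕ) : ℚ)) /
        (Nat.factorial e))
    (h : ℕ) (h1 : p + 1 ≤ h) (h2 : h ≤ 2 * p) :
    ∑ i ∈ Finset.range (h - p + 1),
      (-1 : ℚ) ^ i * (∑ j ∈ Finset.range (i + 1), (Nat.choose (2 * p + 1) j : ℚ)) *
        x (h - i - p) = 0 :=
  stmt6_general p x hx0 hx h h1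
end

section
/- Let p ≥ 1 and define f_r(u) = (2/(2r)!)·∏_{k=0}^{r-1}(u² - k²) for r ≥ 1 and f_0(u) = 2. Then for every integer h with 0 ≤ h ≤ p, ∑_{r=0}^{p} (-1)^r 2^{2r} f_r(h) = 2·(-1)^h, and for h = p+1, ∑_{r=0}^{p} (-1)^r 2^{2r} f_r(p+1) = 2·(-1)^{p+1} + (-1)^p 2^{2p+2}. -/
/-!
The polynomial `f_{r+1}` has second difference `f_r` (after the normalisation `2 / (2r)!`, this is
an identity between the products `u ∏_{|j| ≤ r} (u - j)`), so the alternating sum satisfies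
`F_p(u+1) + 2 F_p(u) + F_p(u-1) = 4 (-1)^p 2^{2p} f_p(u)`. As `f_r` vanishes at `0, …, r-1` and
`f_r(r) = 1` for `r ≥ 1`, the value `F_p(n)` does not depend on `p ≥ n`, and `n ↦ F_n(n)` obeys
`x_{n+2} = -2 x_{n+1} - x_n` with `x_0 = 2`, `x_1 = -2`; hence `F_n(n) = 2 (-1)^n`. Finally
`F_p(p+1)` is `F_{p+1}(p+1)` minus its top term `(-1)^{p+1} 2^{2p+2}`.
-/

open Finset Polynomial

section SqSubSqProduct

variable {R : Type*} [CommRing R]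

theorem descPochhammer_eval_succ_add_one (n : ℕ) (x : R) :
    (descPochhammer R (n + 1)).eval (x + 1) = (x + 1) * (descPochhammer R n).eval x := by
  simp only [descPochhammer_succ_left, eval_mul, eval_X, eval_comp, eval_sub, eval_one,
    add_sub_cancel_right]

theorem prod_range_succ_sq_sub_sq (r : ℕ) (u : R) :
    ∏ k ∈ range (r + 1), (u ^ 2 - (k : R) ^ 2) =
      u * (descPochhammer R (2 * r + 1)).eval (u + r) := by
  induction r with
  | zero => simp [sq]
  | succ m ih =>
    rw [prod_range_succ, ih, show 2 * (m + 1) + 1 = 2 * m + 1 + 1 + 1 by ring,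
      show u + ((m + 1 : ℕ) : R) = u + m + 1 by push_cast; ring,
      descPochhammer_eval_succ_add_one, descPochhammer_succ_eval (2 * m + 1)]
    push_cast
    ring

theorem prod_range_succ_sq_sub_sq_second_diff (r : ℕ) (u : R) :
    ∏ k ∈ range (r + 1), ((u + 1) ^ 2 - (k : R) ^ 2) +
        ∏ k ∈ range (r + 1), ((u - 1) ^ 2 - (k : R) ^ 2) =
      2 * ∏ k ∈ range (r + 1), (u ^ 2 - (k : R) ^ 2) +
        (2 * r + 2) * (2 * r + 1) * ∏ k ∈ range r, (u ^ 2 - (k : R) ^ 2) := by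
  cases r with
  | zero =>
    simp only [zero_add, range_one, prod_singleton, range_zero, prod_empty, Nat.cast_zero]
    ring
  | succ m =>
    set D := (descPochhammer R (2 * m + 1)).eval (u + m)
    have hplus : (descPochhammer R (2 * m + 1 + 1 + 1)).eval (u + 1 + (m + 1 : ℕ)) =
        (u + m + 2) * (u + m + 1) * D := by
      rw [show u + 1 + ((m + 1 : ℕ) : R) = u + m + 1 + 1 by push_cast; ring,
        descPochhammer_eval_succ_add_one, descPochhammer_eval_succ_add_one]
      ring
    have hminus : (descPochhammer R (2 * m + 1 + 1 + 1)).eval (u - 1 + (m + 1 : ℕ)) =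
        D * (u - m - 1) * (u - m - 2) := by
      rw [show u - 1 + ((m + 1 : ℕ) : R) = u + m by push_cast; ring,
        descPochhammer_succ_eval (2 * m + 1 + 1), descPochhammer_succ_eval (2 * m + 1)]
      push_cast
      ring
    rw [prod_range_succ_sq_sub_sq, prod_range_succ_sq_sub_sq, prod_range_succ (n := m + 1),
      prod_range_succ_sq_sub_sq, show 2 * (m + 1) + 1 = 2 * m + 1 + 1 + 1 by ring, hplus, hminus]
    push_cast
    ring

end SqSubSqProduct

open Nat

section GramSum

variable {K : Type*} [Field K]

/-- The paper's `f_r`; at `r = 0` the empty product gives `f_0 = 2`. -/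
def gramTerm (r : ℕ) (u : K) : K := 2 / (2 * r)! * ∏ k ∈ range r, (u ^ 2 - (k : K) ^ 2)

/-- The paper's `F_p`. -/
def gramSum (p : ℕ) (u : K) : K := ∑ r ∈ range (p + 1), (-1) ^ r * 2 ^ (2 * r) * gramTerm r u

theorem gramTerm_zero (u : K) : gramTerm 0 u = 2 := by
  simp [gramTerm]

theorem gramTerm_natCast_of_lt {n r : ℕ} (h : n < r) : gramTerm r (n : K) = 0 := by
  rw [gramTerm, prod_eq_zero (mem_range.mpr h) (sub_self _), mul_zero]

theorem gramTerm_succ_natCast_succ [CharZero K] (n : ℕ) :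
    gramTerm (n + 1) ((n + 1 : ℕ) : K) = 1 := by
  rw [gramTerm, prod_range_succ_sq_sub_sq, show ((n + 1 : ℕ) : K) + n = (2 * n + 1 : ℕ) by
    push_cast; ring, descPochhammer_eval_eq_descFactorial, descFactorial_self,
    show 2 * (n + 1) = 2 * n + 1 + 1 by ring, factorial_succ (2 * n + 1), div_mul_eq_mul_div,
    div_eq_one_iff_eq (Nat.cast_ne_zero.mpr (by positivity))]
  push_cast
  ring

theorem gramTerm_second_diff [CharZero K] (r : ℕ) (u : K) :
    gramTerm (r + 1) (u + 1) + gramTerm (r + 1) (u - 1) =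
      2 * gramTerm (r + 1) u + gramTerm r u := by
  have hfact : ((2 * (r + 1))! : K) = (2 * r + 2) * (2 * r + 1) * (2 * r)! := by
    rw [show 2 * (r + 1) = 2 * r + 1 + 1 by ring, factorial_succ, factorial_succ]
    push_cast
    ring
  have : ((2 * r)! : K) ≠ 0 := Nat.cast_ne_zero.mpr (factorial_ne_zero _)
  have : (2 * r + 2 : K) * (2 * r + 1) ≠ 0 := by norm_cast
  set a : K := (2 * r + 2) * (2 * r + 1)
  simp only [gramTerm]
  rw [← mul_add, prod_range_succ_sq_sub_sq_second_diff, hfact]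
  field_simp
  ring

theorem gramSum_succ (p : ℕ) (u : K) :
    gramSum (p + 1) u = gramSum p u + (-1) ^ (p + 1) * 2 ^ (2 * (p + 1)) * gramTerm (p + 1) u :=
  sum_range_succ _ _

theorem gramSum_second_diff [CharZero K] (p : ℕ) (u : K) :
    gramSum p (u + 1) + gramSum p (u - 1) =
      -2 * gramSum p u + 4 * ((-1) ^ p * 2 ^ (2 * p) * gramTerm p u) := by
  have split (v : K) : gramSum p v =
      ∑ r ∈ range p, (-1) ^ (r + 1) * 2 ^ (2 * (r + 1)) * gramTerm (r + 1) v + 2 := by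
    simp [gramSum, sum_range_succ', gramTerm_zero]
  have hsum : ∑ r ∈ range p, (-1) ^ (r + 1) * 2 ^ (2 * (r + 1)) * gramTerm (r + 1) (u + 1) +
      ∑ r ∈ range p, (-1) ^ (r + 1) * 2 ^ (2 * (r + 1)) * gramTerm (r + 1) (u - 1) =
        2 * ∑ r ∈ range p, (-1) ^ (r + 1) * 2 ^ (2 * (r + 1)) * gramTerm (r + 1) u -
          4 * ∑ r ∈ range p, (-1) ^ r * 2 ^ (2 * r) * gramTerm r u := by
    rw [mul_sum, mul_sum, ← sum_add_distrib, ← sum_sub_distrib]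
    refine sum_congr rfl fun r _ => ?_
    rw [← mul_add, gramTerm_second_diff]
    ring
  have htop : gramSum p u =
      ∑ r ∈ range p, (-1) ^ r * 2 ^ (2 * r) * gramTerm r u + (-1) ^ p * 2 ^ (2 * p) * gramTerm p u :=
    sum_range_succ _ _
  linear_combination split (u + 1) + split (u - 1) + hsum - 2 * split u + 4 * htop

theorem gramSum_natCast_of_le {n p : ℕ} (h : n ≤ p) : gramSum p (n : K) = gramSum n (n : K) := by
  induction p, h using Nat.le_induction with
  | base => rfl
  | succ p _ ih => rw [gramSum_succ, ih, gramTerm_natCast_of_lt (by omega), mul_zero, add_zero]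

theorem gramSum_natCast_self [CharZero K] (n : ℕ) : gramSum n (n : K) = 2 * (-1) ^ n := by
  induction n using Nat.twoStepInduction with
  | zero => simp [gramSum, gramTerm_zero]
  | one => norm_num [gramSum, sum_range_succ, gramTerm]
  | more n ih₀ ih₁ =>
    have h := gramSum_second_diff (K := K) (n + 2) ((n + 1 : ℕ) : K)
    rw [gramTerm_natCast_of_lt (by omega), gramSum_natCast_of_le (n := n + 1) (by omega),
      show ((n + 1 : ℕ) : K) + 1 = (n + 2 : ℕ) by push_cast; ring,
      show ((n + 1 : ℕ) : K) - 1 = n by push_cast; ring, gramSum_natCast_of_le (n := n) (by omega),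
      ih₀, ih₁] at h
    linear_combination h

end GramSum

theorem stmt7_general (p : ℕ)
    (f : ℕ → ℤ → ℚ)
    (hf0 : ∀ u : ℤ, f 0 u = 2)
    (hf : ∀ r, 1 ≤ r → ∀ u : ℤ, f r u =
      2 / (Nat.factorial (2 * r)) *
        ∏ k ∈ Finset.range r, ((u ^ 2 - (k : ℤ) ^ 2 : ℤ) : ℚ)) :
    (∀ h : ℤ, 0 ≤ h → h ≤ p →
      ∑ r ∈ Finset.range (p + 1), (-1 : ℚ) ^ r * 2 ^ (2 * r) * f r h =
        2 * (-1 : ℚ) ^ h) ∧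
    (∑ r ∈ Finset.range (p + 1), (-1 : ℚ) ^ r * 2 ^ (2 * r) * f r ((p : ℤ) + 1) =
      2 * (-1 : ℚ) ^ ((p : ℤ) + 1) + (-1 : ℚ) ^ p * 2 ^ (2 * p + 2)) := by
  have hf_eq (r : ℕ) (u : ℤ) : f r u = gramTerm r (u : ℚ) := by
    rcases r.eq_zero_or_pos with rfl | hr
    · rw [hf0, gramTerm_zero]
    · rw [hf r hr, gramTerm]
      push_cast
      rfl
  have hsum (u : ℤ) : ∑ r ∈ range (p + 1), (-1 : ℚ) ^ r * 2 ^ (2 * r) * f r u =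
      gramSum p (u : ℚ) := by
    simp only [hf_eq, gramSum]
  refine ⟨fun h h0 hle => ?_, ?_⟩
  · lift h to ℕ using h0
    rw [hsum, Int.cast_natCast, zpow_natCast]
    exact (gramSum_natCast_of_le (by omega)).trans (gramSum_natCast_self h)
  · have hsucc := gramSum_succ p ((p + 1 : ℕ) : ℚ)
    rw [gramTerm_succ_natCast_succ, gramSum_natCast_self] at hsucc
    rw [hsum, show (((p : ℤ) + 1 : ℤ) : ℚ) = (p + 1 : ℕ) by push_cast; rfl,
      show (p : ℤ) + 1 = (p + 1 : ℕ) by push_cast; rfl, zpow_natCast]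
    linear_combination -hsucc

theorem stmt7 (p : ℕ) (hp : 1 ≤ p)
    (f : ℕ → ℤ → ℚ)
    (hf0 : ∀ u : ℤ, f 0 u = 2)
    (hf : ∀ r, 1 ≤ r → ∀ u : ℤ, f r u =
      2 / (Nat.factorial (2 * r)) *
        ∏ k ∈ Finset.range r, ((u ^ 2 - (k : ℤ) ^ 2 : ℤ) : ℚ)) :
    (∀ h : ℤ, 0 ≤ h → h ≤ p →
      ∑ r ∈ Finset.range (p + 1), (-1 : ℚ) ^ r * 2 ^ (2 * r) * f r h =
        2 * (-1 : ℚ) ^ h) ∧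
    (∑ r ∈ Finset.range (p + 1), (-1 : ℚ) ^ r * 2 ^ (2 * r) * f r ((p : ℤ) + 1) =
      2 * (-1 : ℚ) ^ ((p : ℤ) + 1) + (-1 : ℚ) ^ p * 2 ^ (2 * p + 2)) :=
  stmt7_general p f hf0 hf
end

section
/- Let p ≥ 1. Define n_e = binom(2p, e/2) for even e ∈ [0, 4p], and define x_0 = 1, x_2 = -(2p+1), and x_e for even e ≥ 4 by n_0 x_e + n_2 x_{e-2} + ⋯ + n_e x_0 = 0. Then for every k ≥ 0, x_{2k} = (-1)^k (2p+2k-1) · (2p-2+k)(2p-3+k)⋯(k+1) / (2p-1)!. -/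
/-! The recurrence says exactly that `(1 + X) ^ (2p) * ∑ x_k X^k = 1 - X`, so the generating
series of `x` is `(1 - X) (1 + X) ^ (-2p)`. Writing `2p = m + 2`, the series `(1 + X) ^ (-(m + 2))`
has `k`-th coefficient `(-1)^k C(m + 1 + k, m + 1)`, hence
`x_k = (-1)^k (C(m + 1 + k, m + 1) + C(m + k, m + 1))`, and multiplying the bracket by `(m + 1)!`
gives `(k + 1) ⋯ (k + m) ((k + m + 1) + k)`. -/

open PowerSeries Finset

theorem Nat.prod_Icc_one_add_eq_ascFactorial (k m : ℕ) :
    ∏ i ∈ Icc 1 m, (k + i) = (k + 1).ascFactorial m := by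
  rw [ascFactorial_eq_prod_range, ← Ico_add_one_right_eq_Icc, prod_Ico_eq_prod_range,
    Nat.add_sub_cancel]
  exact prod_congr rfl fun i _ => by omega

theorem Nat.choose_add_choose_mul_factorial (m k : ℕ) :
    ((m + 1 + k).choose (m + 1) + (m + k).choose (m + 1)) * (m + 1).factorial =
      (m + 2 * k + 1) * (k + 1).ascFactorial m := by
  have hasc_succ :
      (k + 1).ascFactorial (m + 1) = (m + 1).factorial * (m + 1 + k).choose (m + 1) := by
    rw [ascFactorial_eq_factorial_mul_choose, add_comm k]
  have hasc : k.ascFactorial (m + 1) = (m + 1).factorial * (m + k).choose (m + 1) := by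
    rw [ascFactorial_eq_factorial_mul_choose', show k + (m + 1) - 1 = m + k by omega]
  have hasc_peel : k.ascFactorial (m + 1) = k * (k + 1).ascFactorial m := by
    rw [ascFactorial_eq_prod_range, ascFactorial_eq_prod_range, prod_range_succ']
    simp only [add_zero, mul_comm k]
    congr 1
    exact prod_congr rfl fun i _ => by omega
  calc _ = (k + 1).ascFactorial (m + 1) + k.ascFactorial (m + 1) := by rw [hasc_succ, hasc]; ring
    _ = _ := by rw [hasc_peel, ascFactorial_succ]; ring

namespace PowerSeries

variable {R : Type*} [CommRing R]

theorem coeff_one_add_X_pow_mul_mk (n e : ℕ) (x : ℕ → R) :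
    coeff e ((1 + X) ^ n * mk x) = ∑ j ∈ range (e + 1), (n.choose j : R) * x (e - j) := by
  have hpoly : ((1 + X) ^ n : R⟦X⟧) = (((1 + Polynomial.X) ^ n : Polynomial R) : R⟦X⟧) := by
    simp
  rw [coeff_mul, Nat.sum_antidiagonal_eq_sum_range_succ_mk, hpoly]
  simp only [Polynomial.coeff_coe, Polynomial.coeff_one_add_X_pow, coeff_mk]

theorem one_add_X_pow_mul_mk_eq_one_sub_X {n : ℕ} {x : ℕ → R} (h0 : x 0 = 1)
    (h1 : x 1 = -(n + 1))
    (hx : ∀ e, 2 ≤ e → ∑ j ∈ range (e + 1), (n.choose j : R) * x (e - j) = 0) :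
    (1 + X) ^ n * mk x = 1 - X := by
  ext e
  rw [coeff_one_add_X_pow_mul_mk]
  match e with
  | 0 => simp [h0]
  | 1 => simp [sum_range_succ, h0, h1, coeff_X]
  | e + 2 => simp [hx (e + 2) (by omega), coeff_X]

theorem one_add_X_pow_mul_rescale_invOneSubPow (d : ℕ) :
    (1 + X) ^ d * rescale (-1 : R) (invOneSubPow R d : R⟦X⟧) = 1 := by
  rw [rescale_neg_one_invOneSubPow, ← binomialSeries_nat (R := ℤ), ← binomialSeries_add]
  simp

theorem eq_mul_rescale_invOneSubPow_of_one_add_X_pow_mul_eq {d : ℕ} {f g : R⟦X⟧}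
    (h : (1 + X) ^ d * f = g) : f = g * rescale (-1 : R) (invOneSubPow R d : R⟦X⟧) := by
  rw [← h, mul_right_comm, one_add_X_pow_mul_rescale_invOneSubPow, one_mul]

theorem coeff_one_sub_X_mul_rescale_invOneSubPow (m k : ℕ) :
    coeff k ((1 - X) * rescale (-1 : R) (invOneSubPow R (m + 2) : R⟦X⟧)) =
      (-1) ^ k * (((m + 1 + k).choose (m + 1) + (m + k).choose (m + 1) : ℕ) : R) := by
  rw [sub_mul, one_mul, map_sub]
  cases k with
  | zero => simp [coeff_rescale, invOneSubPow_val_succ_eq_mk_add_choose]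
  | succ k =>
    rw [coeff_succ_X_mul, coeff_rescale, coeff_rescale, invOneSubPow_val_succ_eq_mk_add_choose,
      coeff_mk, coeff_mk, show m + 1 + (k + 1) = m + 1 + k + 1 by omega,
      show m + (k + 1) = m + 1 + k by omega]
    push_cast
    ring

end PowerSeries

theorem stmt10 (p : ℕ) (hp : 1 ≤ p)
    (x : ℕ → ℚ) (hx0 : x 0 = 1) (hx1 : x 1 = -(2 * p + 1))
    (hx : ∀ e, 2 ≤ e →
      ∑ j ∈ Finset.range (e + 1), (Nat.choose (2 * p) j : ℚ) * x (e - j) = 0)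
    (k : ℕ) :
    x k = (-1 : ℚ) ^ k * (2 * p + 2 * k - 1) *
      (∏ i ∈ Finset.Icc 1 (2 * p - 2), ((k + i : ℕ) : ℚ)) /
        (Nat.factorial (2 * p - 1)) := by
  obtain ⟨m, hm⟩ : ∃ m, 2 * p = m + 2 := ⟨2 * p - 2, by omega⟩
  have hx1' : x 1 = -(((m + 2 : ℕ) : ℚ) + 1) := by rw [hx1, ← hm]; push_cast; ring
  have hmk : mk x = (1 - X) * rescale (-1 : ℚ) (invOneSubPow ℚ (m + 2) : ℚ⟦X⟧) :=
    eq_mul_rescale_invOneSubPow_of_one_add_X_pow_mul_eq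
      (one_add_X_pow_mul_mk_eq_one_sub_X hx0 hx1' (hm ▸ hx))
  have hxk :
      x k = (-1) ^ k * (((m + 1 + k).choose (m + 1) + (m + k).choose (m + 1) : ℕ) : ℚ) := by
    rw [← coeff_one_sub_X_mul_rescale_invOneSubPow, ← hmk, coeff_mk]
  rw [hxk, show 2 * p - 1 = m + 1 by omega, show 2 * p - 2 = m by omega, ← Nat.cast_prod,
    Nat.prod_Icc_one_add_eq_ascFactorial, eq_div_iff (by positivity), mul_assoc, ← Nat.cast_mul,
    Nat.choose_add_choose_mul_factorial]
  have hp' : (2 * p : ℚ) = m + 2 := by exact_mod_cast hm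
  push_cast
  linear_combination -(-1 : ℚ) ^ k * ((k + 1).ascFactorial m : ℚ) * hp'
end

section
/- Let p ≥ 1 and define φ_p : {odd integers} → ℤ by φ_p(d) = 0 if |d| < 2p-1 and φ_p(d) = x_{|d|-2p+1} if |d| ≥ 2p-1, where x_{2k} = (-1)^k(2p+2k-1)(2p-2+k)(2p-3+k)⋯(k+1)/(2p-1)!. Then for every odd integer h, φ_p(h) = (-1)^{(h+2p+1)/2} · 2h · (h+2p-3)(h+2p-5)⋯(h-2p+3) / (4p-2)!!, where (4p-2)!! = 2·4⋯(4p-2) = 2^{2p-1}(2p-1)!. -/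
lemma key_pos (n k : ℕ) :
    ∏ i ∈ Finset.range n, ((2 * (k : ℤ) + 2 * (n : ℤ) - 2 * (i : ℤ) : ℤ) : ℚ) =
      2 ^ n * ∏ i ∈ Finset.Icc 1 n, ((k + i : ℕ) : ℚ) := by
  induction n with
  | zero => simp
  | succ n ih =>
    rw [Finset.prod_range_succ', Finset.prod_Icc_succ_top (by omega)]
    have h0 : ((2 * (k : ℤ) + 2 * ((n+1 : ℕ) : ℤ) - 2 * ((0:ℕ) : ℤ) : ℤ) : ℚ)
        = 2 * ((k + (n+1) : ℕ) : ℚ) := by push_cast; ring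
    have h1 : ∀ i ∈ Finset.range n,
        ((2 * (k : ℤ) + 2 * ((n+1 : ℕ) : ℤ) - 2 * ((i+1 : ℕ) : ℤ) : ℤ) : ℚ)
        = ((2 * (k : ℤ) + 2 * (n : ℤ) - 2 * (i : ℤ) : ℤ) : ℚ) := by
      intro i _; congr 1; push_cast; ring
    rw [Finset.prod_congr rfl h1, ih, h0]
    ring

lemma key_neg (n k : ℕ) :
    ∏ i ∈ Finset.range n, (((-(2 * (k : ℤ) + 2 + 2 * (i : ℤ)) : ℤ)) : ℚ) =
      (-2) ^ n * ∏ i ∈ Finset.Icc 1 n, ((k + i : ℕ) : ℚ) := by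
  induction n with
  | zero => simp
  | succ n ih =>
    rw [Finset.prod_range_succ, Finset.prod_Icc_succ_top (by omega), ih]
    have h0 : (((-(2 * (k : ℤ) + 2 + 2 * (n : ℤ)) : ℤ)) : ℚ)
        = (-2) * ((k + (n+1) : ℕ) : ℚ) := by push_cast; ring
    rw [h0]; ring

lemma sgn_eq (e : ℤ) (k : ℕ) (hpar : Even e ↔ Even k) :
    (-1 : ℚ) ^ e = (-1 : ℚ) ^ k := by
  rcases Nat.even_or_odd k with hk | hk
  · rw [hk.neg_one_pow, Even.neg_one_zpow (hpar.mpr hk)]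
  · rw [hk.neg_one_pow, Odd.neg_one_zpow]
    rw [← Int.not_even_iff_odd]
    exact fun he => (Nat.not_even_iff_odd.mpr hk) (hpar.mp he)

lemma sgn_neg (e : ℤ) (k : ℕ) (hpar : Even e ↔ ¬ Even k) :
    (-1 : ℚ) ^ e = -(-1 : ℚ) ^ k := by
  rcases Nat.even_or_odd k with hk | hk
  · rw [hk.neg_one_pow,
      Odd.neg_one_zpow (Int.not_even_iff_odd.mp (fun he => (hpar.mp he) hk))]
  · rw [hk.neg_one_pow, Even.neg_one_zpow (hpar.mpr (Nat.not_even_iff_odd.mpr hk))]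
    norm_num

theorem stmt11 (p : ℕ) (hp : 1 ≤ p)
    (x : ℕ → ℚ)
    (hxc : ∀ k : ℕ, x k = (-1 : ℚ) ^ k * (2 * p + 2 * k - 1) *
      (∏ i ∈ Finset.Icc 1 (2 * p - 2), ((k + i : ℕ) : ℚ)) /
        (Nat.factorial (2 * p - 1)))
    (φ : ℤ → ℚ)
    (hφ : ∀ d : ℤ, Odd d → φ d =
      if |d| < 2 * (p : ℤ) - 1 then 0 else x ((|d| - (2 * (p : ℤ) - 1)) / 2).toNat)
    (h : ℤ) (hh : Odd h) :
    φ h = (-1 : ℚ) ^ ((h + 2 * (p : ℤ) + 1) / 2) * (2 * h) *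
      (∏ i ∈ Finset.range (2 * p - 2), ((h + 2 * (p : ℤ) - 3 - 2 * i : ℤ) : ℚ)) /
        (2 ^ (2 * p - 1) * Nat.factorial (2 * p - 1)) := by
  obtain ⟨m, hm⟩ := hh
  have hF : ((Nat.factorial (2*p-1) : ℚ)) ≠ 0 := by positivity
  rw [hφ h ⟨m, hm⟩]
  by_cases hlt : |h| < 2 * (p : ℤ) - 1
  · rw [if_pos hlt]
    rw [abs_lt] at hlt
    have hmem : (m + p - 1).toNat ∈ Finset.range (2*p - 2) := by
      rw [Finset.mem_range]; omega
    have hfac : ((h + 2*(p:ℤ) - 3 - 2 * (((m+p-1).toNat : ℕ) : ℤ) : ℤ) : ℚ) = 0 := by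
      have h0 : (h + 2*(p:ℤ) - 3 - 2 * (((m+p-1).toNat : ℕ) : ℤ) : ℤ) = 0 := by omega
      rw [h0]; norm_num
    rw [Finset.prod_eq_zero hmem hfac]
    simp
  · rw [if_neg hlt]
    push_neg at hlt
    set K : ℕ := ((|h| - (2 * (p : ℤ) - 1)) / 2).toNat with hKdef
    rw [hxc]
    have hKZ : (K : ℤ) = (|h| - (2 * (p : ℤ) - 1)) / 2 := by
      rw [hKdef]
      exact Int.toNat_of_nonneg (by omega)
    rcases abs_cases h with ⟨habs, hsgn⟩ | ⟨habs, hsgn⟩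
    · rw [habs] at hKZ hlt
      have hK : h = 2*(K:ℤ) + 2*(p:ℤ) - 1 := by omega
      have hsign : (-1:ℚ) ^ ((h + 2*(p:ℤ) + 1)/2) = (-1:ℚ)^K := by
        apply sgn_eq
        rw [Int.even_iff, Nat.even_iff]
        omega
      have hprod : ∏ i ∈ Finset.range (2*p-2), ((h + 2*(p:ℤ) - 3 - 2*(i:ℤ) : ℤ):ℚ)
          = 2^(2*p-2) * ∏ i ∈ Finset.Icc 1 (2*p-2), ((K+i : ℕ):ℚ) := by
        rw [← key_pos (2*p-2) K]
        apply Finset.prod_congr rfl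
        intro i _
        congr 1
        omega
      have hval : (2*(p:ℚ) + 2*(K:ℚ) - 1) = (h:ℚ) := by
        have := congrArg (fun z : ℤ => (z : ℚ)) hK
        push_cast at this
        linarith
      rw [hsign, hprod, hval]
      have hpow : (2:ℚ)^(2*p-1) = 2 * 2^(2*p-2) := by
        rw [show 2*p-1 = (2*p-2)+1 by omega, pow_succ]; ring
      rw [hpow]
      field_simp
    · rw [habs] at hKZ hlt
      have hK : h = -(2*(K:ℤ) + 2*(p:ℤ) - 1) := by omega
      have hsign : (-1:ℚ) ^ ((h + 2*(p:ℤ) + 1)/2) = -(-1:ℚ)^K := by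
        apply sgn_neg
        rw [Int.even_iff, Nat.even_iff]
        omega
      have hprod : ∏ i ∈ Finset.range (2*p-2), ((h + 2*(p:ℤ) - 3 - 2*(i:ℤ) : ℤ):ℚ)
          = 2^(2*p-2) * ∏ i ∈ Finset.Icc 1 (2*p-2), ((K+i : ℕ):ℚ) := by
        have : ∏ i ∈ Finset.range (2*p-2), ((h + 2*(p:ℤ) - 3 - 2*(i:ℤ) : ℤ):ℚ)
            = ∏ i ∈ Finset.range (2*p-2), (((-(2 * (K : ℤ) + 2 + 2 * (i : ℤ)) : ℤ)) : ℚ) := by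
          apply Finset.prod_congr rfl
          intro i _
          congr 1
          omega
        rw [this, key_neg]
        congr 1
        exact Even.neg_pow ⟨p-1, by omega⟩ 2
      have hval : (2*(p:ℚ) + 2*(K:ℚ) - 1) = -(h:ℚ) := by
        have := congrArg (fun z : ℤ => (z : ℚ)) hK
        push_cast at this
        linarith
      rw [hsign, hprod, hval]
      have hpow : (2:ℚ)^(2*p-1) = 2 * 2^(2*p-2) := by
        rw [show 2*p-1 = (2*p-2)+1 by omega, pow_succ]; ring
      rw [hpow]
      field_simp
end

section
/- Let k be a field of characteristic ≠ 2, let p ≥ 1, and let a, b ∈ ℕ with a + b = 2p and (-1)^a = (-1)^b. Set ε = -(-1)^a, define n_e by (1-T)^a(1+T)^b = ∑_e n_e T^e, and define x_e by x_0 = 1 and ∑_{j=0}^{e} n_j x_{e-j} = 0 for e ≥ 1. Let V be a k-vector space with basis w_0, …, w_{2p-1}, define g ∈ GL(V) by g w_i = w_{i+1} for i < 2p-1 and g w_{2p-1} = ε ∑_{i=0}^{2p-1} n_i w_i, and define a bilinear form (,) on V by (w_i, w_j) = 0 if |i-j| < p, (w_i, w_j) = x_s if j - i = p + s with s ≥ 0,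 and (w_i, w_j) = ε x_s if i - j = p + s with s ≥ 0. Then (,) is nondegenerate, satisfies (x,y) = ε(y,x) for all x, y ∈ V, and g is an isometry of (,). -/
/-!
Write `(w_i, w_j) = c (j - i)` with `c d = x̃ (d - p) + ε x̃ (-d - p)`, where `x̃` extends `x` by
zero to `ℤ`. The Gram matrix is then Toeplitz and `c (-d) = ε c d`, which is the `ε`-symmetry.
Since `x̃` is the inverse of the power series `∑ n_e T^e`, and this polynomial is palindromic up
to sign (`n_{2p-e} = -ε n_e`), the sequence `c` satisfies the linear recurrence
`∑_{e ≤ 2p} n_e c (e - m) = 0` for every `m ∈ ℤ`: this is exactly what makes the companion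
matrix `g` preserve the Toeplitz form. For nondegeneracy, the columns `p, …, 2p - 1` form a
unitriangular system (`x_0 = 1`) for the first half of a vector in the radical, and reversing the
basis exchanges the two halves.
-/

open Polynomial Finset Matrix

namespace Polynomial

variable {R : Type*} [CommRing R]

theorem reflect_pow_of_natDegree_le {q : R[X]} {N : ℕ} (hq : q.natDegree ≤ N) (m : ℕ) :
    reflect (m * N) (q ^ m) = reflect N q ^ m := by
  induction m with
  | zero => simp [reflect_one]
  | succ m ih =>
    rw [pow_succ, add_one_mul, reflect_mul _ _ (natDegree_pow_le_of_le m hq) hq, ih, pow_succ]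

theorem natDegree_one_sub_X_le : (1 - X : R[X]).natDegree ≤ 1 :=
  natDegree_sub_le_of_le natDegree_one.le natDegree_X_le

theorem natDegree_one_add_X_le : (1 + X : R[X]).natDegree ≤ 1 :=
  natDegree_add_le_of_degree_le (by simp) natDegree_X_le

theorem natDegree_one_sub_X_pow_mul_one_add_X_pow_le (a b : ℕ) :
    ((1 - X) ^ a * (1 + X) ^ b : R[X]).natDegree ≤ a + b := by
  simpa using natDegree_mul_le_of_le (natDegree_pow_le_of_le a natDegree_one_sub_X_le)
    (natDegree_pow_le_of_le b (natDegree_one_add_X_le (R := R)))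

theorem reflect_one_sub_X_pow_mul_one_add_X_pow (a b : ℕ) :
    reflect (a + b) ((1 - X) ^ a * (1 + X) ^ b : R[X]) =
      C ((-1) ^ a) * ((1 - X) ^ a * (1 + X) ^ b) := by
  have h₁ : (1 - X : R[X]).natDegree ≤ 1 := natDegree_one_sub_X_le
  have h₂ : (1 + X : R[X]).natDegree ≤ 1 := natDegree_one_add_X_le
  have h := reflect_mul _ _ (natDegree_pow_le_of_le a h₁) (natDegree_pow_le_of_le b h₂)
  have ha := reflect_pow_of_natDegree_le h₁ a
  have hb := reflect_pow_of_natDegree_le h₂ b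
  simp only [mul_one] at h ha hb
  rw [h, ha, hb]
  simp only [reflect_sub, reflect_add, reflect_one, reflect_one_X, pow_one, map_pow, map_neg,
    map_one]
  rw [← neg_sub, neg_eq_neg_one_mul, mul_pow, add_comm X]
  ring

theorem coeff_one_sub_X_pow_mul_one_add_X_pow_of_le {a b e : ℕ} (he : e ≤ a + b) :
    ((1 - X) ^ a * (1 + X) ^ b : R[X]).coeff (a + b - e) =
      (-1) ^ a * ((1 - X) ^ a * (1 + X) ^ b : R[X]).coeff e := by
  simpa only [coeff_reflect, revAt_le he, coeff_C_mul] using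
    congrArg (coeff · e) (reflect_one_sub_X_pow_mul_one_add_X_pow (R := R) a b)

end Polynomial

section Recurrence

variable {R : Type*} [CommRing R]

def extendByZero (x : ℕ → R) (t : ℤ) : R := if 0 ≤ t then x t.toNat else 0

@[simp]
theorem extendByZero_natCast (x : ℕ → R) (s : ℕ) : extendByZero x s = x s := by
  simp [extendByZero]

theorem extendByZero_of_neg (x : ℕ → R) {t : ℤ} (ht : t < 0) : extendByZero x t = 0 := by
  simp [extendByZero, not_le.2 ht]

theorem sum_range_mul_extendByZero_sub {n x : ℕ → R} {D : ℕ} (hn : ∀ l, D < l → n l = 0)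
    (hn0 : n 0 = 1) (hx0 : x 0 = 1)
    (hx : ∀ e, 1 ≤ e → ∑ j ∈ range (e + 1), n j * x (e - j) = 0) (t : ℤ) :
    ∑ l ∈ range (D + 1), n l * extendByZero x (t - l) = if t = 0 then 1 else 0 := by
  rcases lt_or_ge t 0 with ht | ht
  · rw [if_neg ht.ne]
    exact sum_eq_zero fun l _ => by rw [extendByZero_of_neg x (by omega), mul_zero]
  lift t to ℕ using ht
  set f : ℕ → R := fun l => n l * extendByZero x (t - l)
  have hD : ∑ l ∈ range (D + 1), f l = ∑ l ∈ range (D + t + 1), f l :=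
    sum_subset (range_subset_range.2 (by omega)) fun l hl hl' => by
      simp [f, hn l (by simp only [mem_range] at hl hl'; omega)]
  have ht' : ∑ l ∈ range (t + 1), f l = ∑ l ∈ range (D + t + 1), f l :=
    sum_subset (range_subset_range.2 (by omega)) fun l hl hl' => by
      simp [f, extendByZero_of_neg x (show (t : ℤ) - l < 0 by simp only [mem_range] at hl hl'; omega)]
  have hf : ∑ l ∈ range (t + 1), f l = ∑ l ∈ range (t + 1), n l * x (t - l) :=
    sum_congr rfl fun l hl => by
      simp only [f, ← Nat.cast_sub (show l ≤ t by simp only [mem_range] at hl; omega), extendByZero_natCast]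
  rw [hD, ← ht', hf]
  rcases Nat.eq_zero_or_pos t with rfl | ht0
  · simp [hn0, hx0]
  · simp [hx t ht0, ht0.ne']

-- `(w_i, w_j) = formCoeff p ε x (j - i)`; for `p ≥ 1` at most one of the two terms is nonzero.
def formCoeff (p : ℕ) (ε : R) (x : ℕ → R) (d : ℤ) : R :=
  extendByZero x (d - p) + ε * extendByZero x (-d - p)

theorem formCoeff_of_neg_lt {p : ℕ} (ε : R) (x : ℕ → R) {d : ℤ} (hd : -(p : ℤ) < d) :
    formCoeff p ε x d = extendByZero x (d - p) := by
  rw [formCoeff, extendByZero_of_neg x (t := -d - p) (by omega), mul_zero, add_zero]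

theorem formCoeff_neg {p : ℕ} {ε : R} (hε : ε * ε = 1) (x : ℕ → R) (d : ℤ) :
    formCoeff p ε x (-d) = ε * formCoeff p ε x d := by
  simp only [formCoeff, neg_neg]
  linear_combination (-extendByZero x (-d - p)) * hε

theorem Int.cast_formCoeff (p : ℕ) (ε : ℤ) (x : ℕ → ℤ) (d : ℤ) :
    ((formCoeff p ε x d : ℤ) : R) = formCoeff p (ε : R) (fun s => (x s : R)) d := by
  simp only [formCoeff, extendByZero]
  split_ifs <;> push_cast <;> ring

theorem sum_range_succ_mul_formCoeff_sub_eq_zero {p : ℕ} {ε : R} {n x : ℕ → R}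
    (hpal : ∀ l ≤ 2 * p, n (2 * p - l) = -ε * n l)
    (hinv : ∀ t : ℤ,
      ∑ l ∈ range (2 * p + 1), n l * extendByZero x (t - l) = if t = 0 then 1 else 0)
    (m : ℤ) : ∑ l ∈ range (2 * p + 1), n l * formCoeff p ε x (l - m) = 0 := by
  -- both halves of `formCoeff` reduce to `hinv`, at `p - m` and at `m - p`
  have hfwd : ∑ l ∈ range (2 * p + 1), n l * extendByZero x (l - m - p) =
      -ε * ∑ l ∈ range (2 * p + 1), n l * extendByZero x ((p - m) - l) := by
    rw [← sum_range_reflect, mul_sum]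
    refine sum_congr rfl fun l hl => ?_
    have hl : l ≤ 2 * p := by simp only [mem_range] at hl; omega
    rw [show 2 * p + 1 - 1 - l = 2 * p - l by omega, hpal l hl, Nat.cast_sub hl]
    push_cast
    ring_nf
  have hbwd : ∑ l ∈ range (2 * p + 1), n l * extendByZero x (-(l - m) - p) =
      ∑ l ∈ range (2 * p + 1), n l * extendByZero x ((m - p) - l) :=
    sum_congr rfl fun l _ => by ring_nf
  simp only [formCoeff, mul_add, sum_add_distrib, mul_left_comm (n _) ε, ← mul_sum, hfwd, hbwd,
    hinv]
  simp only [show (p : ℤ) - m = 0 ↔ m - p = 0 by omega]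
  ring

theorem sum_range_mul_formCoeff_sub {p : ℕ} {ε : R} {n x : ℕ → R} (hε : ε * ε = 1)
    (hn0 : n 0 = 1) (hpal : ∀ l ≤ 2 * p, n (2 * p - l) = -ε * n l)
    (hinv : ∀ t : ℤ,
      ∑ l ∈ range (2 * p + 1), n l * extendByZero x (t - l) = if t = 0 then 1 else 0)
    (m : ℤ) :
    ∑ l ∈ range (2 * p), ε * n l * formCoeff p ε x (l - m) =
      formCoeff p ε x ((2 * p : ℕ) - m) := by
  have h := sum_range_succ_mul_formCoeff_sub_eq_zero hpal hinv m
  have hlast : n (2 * p) = -ε := by simpa [hn0] using hpal 0 (Nat.zero_le _)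
  rw [sum_range_succ, hlast] at h
  simp only [mul_assoc, ← mul_sum]
  linear_combination ε * h + formCoeff p ε x ((2 * p : ℕ) - m) * hε

end Recurrence

namespace Matrix

variable {R : Type*} [CommRing R] {N : ℕ}

def toeplitz (c : ℤ → R) : Matrix (Fin N) (Fin N) R := of fun i j => c (j - i)

def companion (q : ℕ → R) : Matrix (Fin N) (Fin N) R :=
  of fun j i => if (i : ℕ) < N - 1 then (if (j : ℕ) = i + 1 then 1 else 0) else q j

theorem toeplitz_transpose {c : ℤ → R} {ε : R} (hc : ∀ d, c (-d) = ε * c d) :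
    (toeplitz c : Matrix (Fin N) (Fin N) R)ᵀ = ε • toeplitz c := by
  ext i j
  simp only [toeplitz, transpose_apply, of_apply, smul_apply, smul_eq_mul, ← hc, neg_sub]

theorem vecMul_toeplitz_comp_rev {c : ℤ → R} {ε : R} (hc : ∀ d, c (-d) = ε * c d)
    (v : Fin N → R) :
    (v ∘ Fin.rev) ᵥ* toeplitz c = ε • ((v ᵥ* toeplitz c) ∘ Fin.rev) := by
  ext j
  simp only [vecMul, dotProduct, toeplitz, of_apply, Function.comp_apply, Pi.smul_apply,
    smul_eq_mul, mul_sum]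
  rw [← Equiv.sum_comp Fin.revPerm]
  refine sum_congr rfl fun i _ => ?_
  simp only [Fin.revPerm_apply, Fin.rev_rev, Fin.val_rev, mul_left_comm ε, ← hc]
  congr 2
  omega

theorem sum_companion_mul {q f : ℕ → R} (hf : ∑ l ∈ range N, q l * f l = f N) (j : Fin N) :
    ∑ l, companion q l j * f l = f (j + 1) := by
  by_cases hj : (j : ℕ) < N - 1
  · rw [sum_eq_single ⟨j + 1, by omega⟩ (fun l _ hl => ?_) (by simp)]
    · simp [companion, hj]
    · simp only [companion, of_apply, if_pos hj]
      rw [if_neg fun h => hl (Fin.ext h), zero_mul]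
  · simp only [companion, of_apply, if_neg hj]
    rw [Fin.sum_univ_eq_sum_range (fun l => q l * f l), hf]
    congr
    omega

theorem companion_transpose_mul_toeplitz_mul_companion {q : ℕ → R} {c : ℤ → R} {ε : R}
    (hc : ∀ d, c (-d) = ε * c d)
    (hq : ∀ m : ℤ, ∑ l ∈ range N, q l * c (l - m) = c (N - m)) :
    (companion q)ᵀ * toeplitz c * companion q = (toeplitz c : Matrix (Fin N) (Fin N) R) := by
  have hTA : toeplitz c * companion q = of fun i j : Fin N => c ((j + 1 : ℕ) - i) := by
    ext i j
    simp only [mul_apply, toeplitz, of_apply, mul_comm (c _)]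
    exact sum_companion_mul (f := fun l : ℕ => c (l - i)) (hq i) j
  have hq' (m : ℤ) : ∑ l ∈ range N, q l * c (m - l) = c (m - N) := by
    simp only [← neg_sub _ m, hc, mul_left_comm _ ε, ← mul_sum, hq]
  ext i j
  rw [Matrix.mul_assoc, hTA, mul_apply]
  simp only [transpose_apply, of_apply]
  rw [sum_companion_mul (f := fun l : ℕ => c ((j + 1 : ℕ) - l)) (hq' _) i]
  simp only [toeplitz, of_apply]
  congr 1
  push_cast
  ring

section Bilinear

variable {ι : Type*} [Fintype ι]

theorem dotProduct_mulVec_comm_of_transpose_eq_smul {B : Matrix ι ι R} {ε : R}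
    (h : Bᵀ = ε • B) (v w : ι → R) : v ⬝ᵥ B *ᵥ w = ε * (w ⬝ᵥ B *ᵥ v) := by
  rw [dotProduct_mulVec, ← mulVec_transpose, h, smul_mulVec, smul_dotProduct, dotProduct_comm,
    smul_eq_mul]

theorem dotProduct_mulVec_mulVec_of_transpose_mul_mul {A B : Matrix ι ι R}
    (h : Aᵀ * B * A = B) (v w : ι → R) : A *ᵥ v ⬝ᵥ B *ᵥ (A *ᵥ w) = v ⬝ᵥ B *ᵥ w := by
  rw [mulVec_mulVec, dotProduct_mulVec, ← vecMul_transpose, vecMul_vecMul, ← Matrix.mul_assoc,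
    h, ← dotProduct_mulVec]

theorem vecMul_eq_zero_of_forall_dotProduct_mulVec [DecidableEq ι] {B : Matrix ι ι R}
    {v : ι → R} (h : ∀ w, v ⬝ᵥ B *ᵥ w = 0) : v ᵥ* B = 0 :=
  funext fun j => by
    simpa only [dotProduct_mulVec, dotProduct_single, mul_one, Pi.zero_apply] using
      h (Pi.single j 1)

end Bilinear

end Matrix

theorem eq_zero_of_forall_sum_mul_sub_eq_zero {R : Type*} [CommRing R] {N m : ℕ}
    {f : Fin N → R} {u : ℤ → R} (hu0 : u 0 = 1) (hu : ∀ t < 0, u t = 0)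
    (h : ∀ t : Fin N, (t : ℕ) < m → ∑ i, f i * u (t - i) = 0) (i : Fin N) (hi : (i : ℕ) < m) :
    f i = 0 := by
  induction i using WellFoundedLT.induction with
  | _ i ih =>
    have hi' := h i hi
    rwa [sum_eq_single i (fun j _ hj => ?_) (by simp), sub_self, hu0, mul_one] at hi'
    rcases lt_or_gt_of_ne hj with hj | hj
    · rw [ih j hj (by omega), zero_mul]
    · rw [hu _ (by simp only [sub_neg, Nat.cast_lt, Fin.val_fin_lt]; exact hj), mul_zero]

theorem eq_zero_of_vecMul_toeplitz_formCoeff_eq_zero {R : Type*} [CommRing R] {p : ℕ} {ε : R}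
    {x : ℕ → R} (hε : ε * ε = 1) (hx0 : x 0 = 1) {v : Fin (2 * p) → R}
    (hv : v ᵥ* toeplitz (formCoeff p ε x) = 0) : v = 0 := by
  have hlow (w : Fin (2 * p) → R) (hw : w ᵥ* toeplitz (formCoeff p ε x) = 0) (i : Fin (2 * p))
      (hi : (i : ℕ) < p) : w i = 0 := by
    refine eq_zero_of_forall_sum_mul_sub_eq_zero (u := extendByZero x)
      (by simp [extendByZero, hx0]) (fun t ht => extendByZero_of_neg x ht) (fun t ht => ?_) i hi
    have hcol := congrFun hw ⟨p + t, by omega⟩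
    simp only [vecMul, dotProduct, toeplitz, of_apply, Pi.zero_apply] at hcol
    refine (sum_congr rfl fun j _ => ?_).trans hcol
    rw [formCoeff_of_neg_lt ε x (by omega)]
    congr 2
    push_cast
    ring
  have hrev : (v ∘ Fin.rev) ᵥ* toeplitz (formCoeff p ε x) = 0 := by
    rw [vecMul_toeplitz_comp_rev (formCoeff_neg hε x), hv, Pi.zero_comp, smul_zero]
  ext i
  rcases lt_or_ge (i : ℕ) p with hi | hi
  · exact hlow v hv i hi
  · simpa using hlow _ hrev i.rev (by simp only [Fin.val_rev]; omega)

theorem stmt17_general (k : Type*) [Field k]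
    (p a b : ℕ) (hab : a + b = 2 * p)
    (ε : ℤ) (hε : ε = -(-1 : ℤ) ^ a)
    (n : ℕ → ℤ)
    (hn : ∀ e, n e =
      ((1 - Polynomial.X) ^ a * (1 + Polynomial.X) ^ b : Polynomial ℤ).coeff e)
    (x : ℕ → ℤ) (hx0 : x 0 = 1)
    (hx : ∀ e, 1 ≤ e → ∑ j ∈ Finset.range (e + 1), n j * x (e - j) = 0)
    (A : Matrix (Fin (2 * p)) (Fin (2 * p)) k)
    (hA : ∀ i j : Fin (2 * p), A j i =
      if (i : ℕ) < 2 * p - 1 then (if (j : ℕ) = (i : ℕ) + 1 then 1 else 0)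
      else ((ε * n j : ℤ) : k))
    (B : Matrix (Fin (2 * p)) (Fin (2 * p)) k)
    (hB : ∀ i j : Fin (2 * p), B i j =
      if (p : ℤ) ≤ (j : ℤ) - (i : ℤ) then ((x ((j : ℤ) - (i : ℤ) - p).toNat : ℤ) : k)
      else if (p : ℤ) ≤ (i : ℤ) - (j : ℤ) then
        ((ε * x ((i : ℤ) - (j : ℤ) - p).toNat : ℤ) : k)
      else 0) :
    (∀ v : Fin (2 * p) → k, (∀ w, v ⬝ᵥ B.mulVec w = 0) → v = 0) ∧
    (∀ v w : Fin (2 * p) → k, v ⬝ᵥ B.mulVec w = (ε : k) * (w ⬝ᵥ B.mulVec v)) ∧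
    (∀ v w : Fin (2 * p) → k,
      (A.mulVec v) ⬝ᵥ B.mulVec (A.mulVec w) = v ⬝ᵥ B.mulVec w) := by
  have hε2 : ε * ε = 1 := by rw [hε, neg_mul_neg, ← mul_pow]; norm_num
  have hεk : (ε : k) * ε = 1 := by rw [← Int.cast_mul, hε2, Int.cast_one]
  have hn0 : n 0 = 1 := by rw [hn, coeff_zero_eq_eval_zero]; simp
  have hdeg (l : ℕ) (hl : 2 * p < l) : n l = 0 := by
    rw [hn]
    exact coeff_eq_zero_of_natDegree_lt
      ((natDegree_one_sub_X_pow_mul_one_add_X_pow_le a b).trans_lt (by omega))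
  have hpal (l : ℕ) (hl : l ≤ 2 * p) : n (2 * p - l) = -ε * n l := by
    rw [hn, hn, ← hab, coeff_one_sub_X_pow_mul_one_add_X_pow_of_le (hab ▸ hl), hε, neg_neg]
  have hq (m : ℤ) : ∑ l ∈ range (2 * p), ((ε * n l : ℤ) : k) *
      formCoeff p (ε : k) (fun s => (x s : k)) (l - m) =
      formCoeff p (ε : k) (fun s => (x s : k)) ((2 * p : ℕ) - m) := by
    have h := congrArg (Int.cast : ℤ → k) <| sum_range_mul_formCoeff_sub hε2 hn0 hpal
      (sum_range_mul_extendByZero_sub hdeg hn0 hx0 hx) m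
    push_cast [Int.cast_formCoeff] at h ⊢
    exact h
  have hAq : A = companion fun l => ((ε * n l : ℤ) : k) := ext fun i j => hA j i
  have hBc : B = toeplitz (formCoeff p (ε : k) (fun s => (x s : k))) := ext fun i j => by
    rw [hB, toeplitz, of_apply, ← Int.cast_formCoeff, formCoeff, extendByZero, extendByZero]
    split_ifs <;> first | omega | (push_cast; ring_nf)
  have hc := formCoeff_neg hεk (p := p) (fun s => (x s : k))
  subst hAq hBc
  exact ⟨fun v hv => eq_zero_of_vecMul_toeplitz_formCoeff_eq_zero hεk (by simp [hx0])
      (vecMul_eq_zero_of_forall_dotProduct_mulVec hv),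
    dotProduct_mulVec_comm_of_transpose_eq_smul (toeplitz_transpose hc),
    dotProduct_mulVec_mulVec_of_transpose_mul_mul
      (companion_transpose_mul_toeplitz_mul_companion hc hq)⟩

theorem stmt17 (k : Type*) [Field k] (h2 : (2 : k) ≠ 0)
    (p a b : ℕ) (hp : 1 ≤ p) (hab : a + b = 2 * p)
    (hpar : (-1 : ℤ) ^ a = (-1 : ℤ) ^ b)
    (ε : ℤ) (hε : ε = -(-1 : ℤ) ^ a)
    (n : ℕ → ℤ)
    (hn : ∀ e, n e =
      ((1 - Polynomial.X) ^ a * (1 + Polynomial.X) ^ b : Polynomial ℤ).coeff e)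
    (x : ℕ → ℤ) (hx0 : x 0 = 1)
    (hx : ∀ e, 1 ≤ e → ∑ j ∈ Finset.range (e + 1), n j * x (e - j) = 0)
    (A : Matrix (Fin (2 * p)) (Fin (2 * p)) k)
    (hA : ∀ i j : Fin (2 * p), A j i =
      if (i : ℕ) < 2 * p - 1 then (if (j : ℕ) = (i : ℕ) + 1 then 1 else 0)
      else ((ε * n j : ℤ) : k))
    (B : Matrix (Fin (2 * p)) (Fin (2 * p)) k)
    (hB : ∀ i j : Fin (2 * p), B i j =
      if (p : ℤ) ≤ (j : ℤ) - (i : ℤ) then ((x ((j : ℤ) - (i : ℤ) - p).toNat : ℤ) : k)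
      else if (p : ℤ) ≤ (i : ℤ) - (j : ℤ) then
        ((ε * x ((i : ℤ) - (j : ℤ) - p).toNat : ℤ) : k)
      else 0) :
    (∀ v : Fin (2 * p) → k, (∀ w, v ⬝ᵥ B.mulVec w = 0) → v = 0) ∧
    (∀ v w : Fin (2 * p) → k, v ⬝ᵥ B.mulVec w = (ε : k) * (w ⬝ᵥ B.mulVec v)) ∧
    (∀ v w : Fin (2 * p) → k,
      (A.mulVec v) ⬝ᵥ B.mulVec (A.mulVec w) = v ⬝ᵥ B.mulVec w) :=
  stmt17_general k p a b hab ε hε n hn x hx0 hx A hA B hB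
end

section
/- Let k be a field of characteristic ≠ 2, let p ≥ 1, let a, b ∈ ℕ with a + b = 2p and (-1)^a = (-1)^b, and set ε = -(-1)^a. Define n_e, x_e as the coefficients of (1-T)^a(1+T)^b and its inverse normalization (x_0 = 1, ∑_{j≤e} n_j x_{e-j} = 0 for e ≥ 1). Let V be a 2p-dimensional k-vector space with a nondegenerate ε-symmetric bilinear form (,), and let g be an isometry such that (g-1)^a(g+1)^b = 0 on V, with g acting as a single Jordan block of size a on the generalized 1-eigenspace and -g as a single Jordan block of size b on the generalized (-1)-eigenspace. Suppose w ∈ V satisfies (g^i w, g^j w) = 0 whenever |i-j| < p and (g^i w, g^j w) = 1 whenever j - i = p. Then for all integers i, j: (g^i w, g^j w) = 0 if |i-j| < p, = x_s if j-i = p+s with s ≥ 0, and = ε x_s if i-j = p+s with s ≥ 0. -/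
/-! Since `g` is an isometry, `(g^i w, g^j w) = f (j - i)` with `f d = (w, g^d w)`, and pairing
`(1 - g)^a (1 + g)^b w = 0` with `g^c w` gives the recurrence `∑_e n_e f (c - e) = 0`.
As `f` vanishes on `|d| < p`, the recurrence at `c = p + s` only involves `f p, …, f (p + s)`:
the sequence `s ↦ f (p + s)` satisfies the same triangular recurrence as `x`, with the same
initial value `1`, so the two agree. Negative differences follow from `ε`-symmetry. -/

open Polynomial Finset

namespace LinearMap

section IsometryGroup

variable {R M N : Type*} [CommSemiring R] [AddCommMonoid M] [AddCommMonoid N] [Module R M]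
  [Module R N]

def isometryGroup (B : M →ₗ[R] M →ₗ[R] N) : Subgroup (M ≃ₗ[R] M) where
  carrier := {g | ∀ u v, B (g u) (g v) = B u v}
  mul_mem' {g h} hg hh u v := (hg (h u) (h v)).trans (hh u v)
  one_mem' _ _ := rfl
  inv_mem' {g} hg u v := by
    rw [← hg]
    simp

theorem apply_zpow_apply_zpow_of_mem_isometryGroup {B : M →ₗ[R] M →ₗ[R] N}
    {g : M ≃ₗ[R] M} (hg : g ∈ isometryGroup B) (i j : ℤ) (u v : M) :
    B ((g ^ i) u) ((g ^ j) v) = B u ((g ^ (j - i)) v) := by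
  rw [← zpow_mem hg i u ((g ^ (j - i)) v), ← LinearEquiv.mul_apply, ← zpow_add,
    add_sub_cancel]

end IsometryGroup

end LinearMap

open LinearMap

theorem sum_coeff_mul_apply_zpow_eq_zero {k V : Type*} [CommSemiring k] [AddCommMonoid V]
    [Module k V] {B : V →ₗ[k] V →ₗ[k] k} {g : V ≃ₗ[k] V}
    (hg : g ∈ isometryGroup B) {P : k[X]} (hP : aeval (g : Module.End k V) P = 0) {m : ℕ}
    (hm : P.natDegree < m) (w : V) (c : ℤ) :
    ∑ e ∈ Finset.range m, P.coeff e * B w ((g ^ (c - e)) w) = 0 := by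
  have h := congrArg (fun L : Module.End k V => B (L w) ((g ^ c) w)) hP
  simp only [aeval_eq_sum_range' hm, LinearMap.coe_sum, LinearMap.coe_smul, Finset.sum_apply,
    Pi.smul_apply, map_sum, map_smul, smul_eq_mul, LinearMap.zero_apply, map_zero] at h
  rw [← h]
  refine sum_congr rfl fun e _ => ?_
  rw [← apply_zpow_apply_zpow_of_mem_isometryGroup hg, zpow_natCast, LinearEquiv.pow_apply,
    Module.End.pow_apply, LinearEquiv.coe_coe]

theorem eq_of_sum_range_mul_eq_zero {R : Type*} [Ring R] {n u v : ℕ → R} (hn0 : n 0 = 1)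
    (h0 : u 0 = v 0) (hu : ∀ s, 1 ≤ s → ∑ j ∈ Finset.range (s + 1), n j * u (s - j) = 0)
    (hv : ∀ s, 1 ≤ s → ∑ j ∈ Finset.range (s + 1), n j * v (s - j) = 0) : u = v := by
  funext s
  induction s using Nat.strong_induction_on with
  | _ s ih =>
    rcases Nat.eq_zero_or_pos s with rfl | hs
    · exact h0
    have hu := hu s hs
    rw [← hv s hs, sum_range_succ', sum_range_succ'] at hu
    have htail : ∑ j ∈ Finset.range s, n (j + 1) * u (s - (j + 1)) =
        ∑ j ∈ Finset.range s, n (j + 1) * v (s - (j + 1)) :=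
      sum_congr rfl fun j _ => by rw [ih (s - (j + 1)) (by omega)]
    simpa [htail, hn0] using hu

theorem sum_range_mul_add_eq_zero_of_abs_lt {R : Type*} [Semiring R] {p : ℕ} {n : ℕ → R}
    {f : ℤ → R} (hn : ∀ e, 2 * p < e → n e = 0) (hf : ∀ d : ℤ, |d| < p → f d = 0)
    (hrec : ∀ c : ℤ, ∑ e ∈ Finset.range (2 * p + 1), n e * f (c - e) = 0) {s : ℕ}
    (hs : 1 ≤ s) :
    ∑ j ∈ Finset.range (s + 1), n j * f (p + (s - j : ℕ)) = 0 := by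
  set t : ℕ → R := fun j => n j * f (p + s - j)
  have ht : ∀ j, s < j → t j = 0 := by
    intro j hj
    rcases lt_or_ge (2 * p) j with hjp | hjp
    · simp [t, hn j hjp]
    · simp only [t]
      rw [hf _ (abs_lt.2 ⟨by omega, by omega⟩), mul_zero]
  calc ∑ j ∈ Finset.range (s + 1), n j * f (p + (s - j : ℕ))
      = ∑ j ∈ Finset.range (s + 1), t j :=
        sum_congr rfl fun j hj => by
          rw [Nat.cast_sub (Nat.lt_succ_iff.1 (mem_range.1 hj)), ← add_sub_assoc]
    _ = ∑ j ∈ Finset.range (s + 2 * p + 1), t j :=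
        sum_subset (range_subset_range.2 (by omega)) fun j _ hj =>
          ht j (by simpa using hj)
    _ = ∑ j ∈ Finset.range (2 * p + 1), t j :=
        (sum_subset (range_subset_range.2 (by omega)) fun j _ hj => by
          simp [t, hn j (by simpa [Nat.lt_succ_iff] using hj)]).symm
    _ = 0 := by simpa [t, add_sub_right_comm] using hrec (p + s)

theorem apply_zpow_natCast_add_eq_of_aeval_eq_zero {k V : Type*} [CommRing k]
    [AddCommMonoid V] [Module k V] {B : V →ₗ[k] V →ₗ[k] k} {g : V ≃ₗ[k] V}
    (hg : g ∈ isometryGroup B) {p : ℕ}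
    {P : k[X]} (hP : aeval (g : Module.End k V) P = 0) (hP0 : P.coeff 0 = 1)
    (hdeg : P.natDegree ≤ 2 * p) {x : ℕ → k} (hx0 : x 0 = 1)
    (hx : ∀ e, 1 ≤ e → ∑ j ∈ Finset.range (e + 1), P.coeff j * x (e - j) = 0) {w : V}
    (hw0 : ∀ d : ℤ, |d| < p → B w ((g ^ d) w) = 0) (hwp : B w ((g ^ (p : ℤ)) w) = 1)
    (s : ℕ) :
    B w ((g ^ ((p : ℤ) + s)) w) = x s :=
  congrFun (eq_of_sum_range_mul_eq_zero (u := fun s => B w ((g ^ ((p : ℤ) + s)) w)) hP0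
    (by simpa [hx0] using hwp)
    (fun _ hs => sum_range_mul_add_eq_zero_of_abs_lt
      (fun e he => coeff_eq_zero_of_natDegree_lt (hdeg.trans_lt he)) hw0
      (sum_coeff_mul_apply_zpow_eq_zero hg hP (Nat.lt_succ_of_le hdeg) w) hs) hx) s

theorem stmt18_general (k : Type*) [Field k]
    (V : Type*) [AddCommGroup V] [Module k V]
    (p a b : ℕ) (hab : a + b = 2 * p)
    (ε : ℤ)
    (n : ℕ → ℤ)
    (hn : ∀ e, n e =
      ((1 - Polynomial.X) ^ a * (1 + Polynomial.X) ^ b : Polynomial ℤ).coeff e)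
    (x : ℕ → ℤ) (hx0 : x 0 = 1)
    (hx : ∀ e, 1 ≤ e → ∑ j ∈ Finset.range (e + 1), n j * x (e - j) = 0)
    (B : V →ₗ[k] V →ₗ[k] k)
    (hsym : ∀ v w : V, B v w = (ε : k) * B w v)
    (g : V ≃ₗ[k] V)
    (hiso : ∀ v w : V, B (g v) (g w) = B v w)
    (hmin : (g.toLinearMap - 1) ^ a * (g.toLinearMap + 1) ^ b = 0)
    (w : V)
    (hw1 : ∀ i j : ℤ, |i - j| < (p : ℤ) → B ((g ^ i) w) ((g ^ j) w) = 0)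
    (hw2 : ∀ i j : ℤ, j - i = (p : ℤ) → B ((g ^ i) w) ((g ^ j) w) = 1)
    (i j : ℤ) :
    B ((g ^ i) w) ((g ^ j) w) =
      if |i - j| < (p : ℤ) then 0
      else if (p : ℤ) ≤ j - i then ((x (j - i - p).toNat : ℤ) : k)
      else (ε : k) * ((x (i - j - p).toNat : ℤ) : k) := by
  set P : k[X] := (1 - X) ^ a * (1 + X) ^ b
  have hg : g ∈ isometryGroup B := hiso
  have hnP : ∀ e, (n e : k) = P.coeff e := by
    intro e
    rw [hn, ← eq_intCast (Int.castRingHom k), ← coeff_map]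
    simp [P]
  have hP : aeval (g : Module.End k V) P = 0 := by
    have hneg : (1 - (g : Module.End k V)) ^ a = (-1) ^ a * (g - 1) ^ a := by
      rw [← neg_pow, neg_sub]
    simp only [P, map_mul, map_pow, map_sub, map_add, map_one, aeval_X, hneg, mul_assoc,
      add_comm (1 : Module.End k V), hmin, mul_zero]
  have hdeg : P.natDegree ≤ 2 * p := by
    rw [← hab]
    simp only [P]
    compute_degree
  have hgram : ∀ s : ℕ, B w ((g ^ ((p : ℤ) + s)) w) = x s := by
    refine apply_zpow_natCast_add_eq_of_aeval_eq_zero hg hP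
      (by simp [P, coeff_zero_eq_eval_zero]) hdeg (by simp [hx0]) (fun e he => ?_)
      (fun d hd => ?_) ?_
    · simpa [← hnP] using congrArg (Int.cast : ℤ → k) (hx e he)
    · simpa using hw1 0 d (by simpa using hd)
    · simpa using hw2 0 p (by simp)
  split_ifs with hlt hge
  · exact hw1 i j hlt
  · obtain ⟨s, hs⟩ := Int.eq_ofNat_of_zero_le (sub_nonneg.2 hge)
    rw [apply_zpow_apply_zpow_of_mem_isometryGroup hg, hs, Int.toNat_natCast, ← hgram s,
      show j - i = p + s by omega]
  · obtain ⟨s, hs⟩ := Int.eq_ofNat_of_zero_le (sub_nonneg.2 (show (p : ℤ) ≤ i - j by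
      rw [abs_lt] at hlt; omega))
    rw [hsym, apply_zpow_apply_zpow_of_mem_isometryGroup hg, hs, Int.toNat_natCast, ← hgram s,
      show i - j = p + s by omega]

theorem stmt18 (k : Type*) [Field k] (h2 : (2 : k) ≠ 0)
    (V : Type*) [AddCommGroup V] [Module k V] [FiniteDimensional k V]
    (p a b : ℕ) (hp : 1 ≤ p) (hab : a + b = 2 * p)
    (hpar : (-1 : ℤ) ^ a = (-1 : ℤ) ^ b)
    (ε : ℤ) (hε : ε = -(-1 : ℤ) ^ a)
    (n : ℕ → ℤ)
    (hn : ∀ e, n e =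
      ((1 - Polynomial.X) ^ a * (1 + Polynomial.X) ^ b : Polynomial ℤ).coeff e)
    (x : ℕ → ℤ) (hx0 : x 0 = 1)
    (hx : ∀ e, 1 ≤ e → ∑ j ∈ Finset.range (e + 1), n j * x (e - j) = 0)
    (hdim : Module.finrank k V = 2 * p)
    (B : V →ₗ[k] V →ₗ[k] k)
    (hsym : ∀ v w : V, B v w = (ε : k) * B w v)
    (hnd : ∀ v : V, (∀ w : V, B v w = 0) → v = 0)
    (g : V ≃ₗ[k] V)
    (hiso : ∀ v w : V, B (g v) (g w) = B v w)
    (hmin : (g.toLinearMap - 1) ^ a * (g.toLinearMap + 1) ^ b = 0)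
    (hJa : Module.finrank k (LinearMap.ker ((g.toLinearMap - 1) ^ (2 * p))) = a)
    (hJa1 : Module.finrank k (LinearMap.ker (g.toLinearMap - 1)) ≤ 1)
    (hJb : Module.finrank k (LinearMap.ker ((g.toLinearMap + 1) ^ (2 * p))) = b)
    (hJb1 : Module.finrank k (LinearMap.ker (g.toLinearMap + 1)) ≤ 1)
    (w : V)
    (hw1 : ∀ i j : ℤ, |i - j| < (p : ℤ) → B ((g ^ i) w) ((g ^ j) w) = 0)
    (hw2 : ∀ i j : ℤ, j - i = (p : ℤ) → B ((g ^ i) w) ((g ^ j) w) = 1)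
    (i j : ℤ) :
    B ((g ^ i) w) ((g ^ j) w) =
      if |i - j| < (p : ℤ) then 0
      else if (p : ℤ) ≤ j - i then ((x (j - i - p).toNat : ℤ) : k)
      else (ε : k) * ((x (i - j - p).toNat : ℤ) : k) :=
  stmt18_general k V p a b hab ε n hn x hx0 hx B hsym g hiso hmin w hw1 hw2 i j
end

section
/- Let p ≥ 1, and write the unique vector w̃ (up to sign) in the (2p+1)-dimensional quadratic space of Lusztig's Section 1.7 as w̃ = ∑_{i=0}^{2p} c_i w_i with c_{2p} ≠ 0; set c̄_i = c_i/c_{2p} and l_j = binom(2p+1, j). Then c̄_i = (-1)^{i-1}(l_0 + l_1 + ⋯ + l_i) for 0 ≤ i ≤ p-1, and c̄_i = (-1)^i (l_0 + l_1 + ⋯ + l_{2p-i}) for p ≤ i ≤ 2p. Equivalently, these are the unique solutions of the linear system ∑_{i=0}^{2p} c̄_i f_p(i - h) = 0 for h ∈ [0, 2p-1] with c̄_{2p} = 1, where f_p(u) = (2/(2p)!)∏_{k=0}^{p-1}(u²-k²). -/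
/-!
Since `f_p` vanishes on `(-p, p)`, the equations for `h = p - m` and `h = p + m` (`1 ≤ m ≤ p`)
are triangular convolutions `∑ F_a c_{2p-(m-a)} = 0` and `∑ c_k F_{m-k} = 0` with
`F_t = f_p(p + t)`, while `h = p` gives `c_0 = -c_{2p}`. The generating series of the `F_t` is
`(1 + X) / (1 - X)^(2p+1)`, whose inverse `(1 - X)^(2p+1) / (1 + X)` has coefficients
`(-1)^s (l_0 + ⋯ + l_s)`; a triangular convolution system with invertible kernel determines
its solution from the first term.
-/

open Finset hiding mk
open PowerSeries

namespace Lusztig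

theorem coeff_eq_of_coeff_mul_eq {R : Type*} [CommRing R] {φ ψ χ : R⟦X⟧} (hφ : IsUnit φ)
    {n : ℕ} (h : ∀ m ≤ n, coeff m (φ * ψ) = coeff m (φ * χ)) :
    ∀ m ≤ n, coeff m ψ = coeff m χ := by
  obtain ⟨u, rfl⟩ := hφ
  have htrunc : trunc (n + 1) ((u : R⟦X⟧) * ψ) = trunc (n + 1) ((u : R⟦X⟧) * χ) := by
    ext m
    simp only [coeff_trunc]
    split_ifs with hm
    exacts [h m (by omega), rfl]
  have hψχ : trunc (n + 1) ψ = trunc (n + 1) χ := by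
    rw [← u.inv_mul_cancel_left ψ, ← u.inv_mul_cancel_left χ, ← trunc_mul_trunc, htrunc,
      trunc_mul_trunc]
  intro m hm
  simpa [coeff_trunc, Nat.lt_succ_of_le hm] using congrArg (Polynomial.coeff · m) hψχ

theorem two_mul_ascFactorial_mul_ascFactorial (t p : ℕ) :
    2 * ((t + 1).ascFactorial p * (t + p).ascFactorial p) =
      (t + 1).ascFactorial (2 * p) + t.ascFactorial (2 * p) := by
  rcases p with _ | q
  · simp
  have hsplit : (t + 1).ascFactorial (2 * q + 1) =
      (t + 1).ascFactorial (q + 1) * (t + q + 2).ascFactorial q := by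
    rw [show t + q + 2 = t + 1 + (q + 1) by ring, Nat.ascFactorial_mul_ascFactorial,
      show q + 1 + q = 2 * q + 1 by ring]
  have h₁ : (t + 1).ascFactorial (2 * (q + 1)) =
      (t + 2 * q + 2) * (t + 1).ascFactorial (2 * q + 1) := by
    rw [show 2 * (q + 1) = (2 * q + 1) + 1 by ring, Nat.ascFactorial_succ]; ring_nf
  have h₂ : t.ascFactorial (2 * (q + 1)) = t * (t + 1).ascFactorial (2 * q + 1) := by
    rw [Nat.succ_ascFactorial, show 2 * (q + 1) = (2 * q + 1) + 1 by ring, Nat.ascFactorial_succ]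
  have h₃ : (t + (q + 1)).ascFactorial (q + 1) = (t + q + 1) * (t + q + 2).ascFactorial q := by
    rw [Nat.succ_ascFactorial, Nat.ascFactorial_succ]; ring_nf
  rw [h₁, h₂, h₃, hsplit]
  ring

theorem prod_range_sq_sub_sq (p t : ℕ) :
    ∏ k ∈ range p, (((p : ℤ) + t) ^ 2 - (k : ℤ) ^ 2) =
      ((t + 1).ascFactorial p * (t + p).ascFactorial p : ℕ) := by
  rw [← Nat.add_descFactorial_eq_ascFactorial, Nat.descFactorial_eq_prod_range,
    Nat.ascFactorial_eq_prod_range, ← prod_mul_distrib]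
  push_cast
  refine prod_congr rfl fun k hk => ?_
  rw [Nat.cast_sub (by simp at hk; omega)]
  push_cast
  ring

def gramFun (p : ℕ) (u : ℤ) : ℚ :=
  2 / (Nat.factorial (2 * p)) * ∏ k ∈ range p, ((u ^ 2 - (k : ℤ) ^ 2 : ℤ) : ℚ)

theorem gramFun_eq_zero {p : ℕ} {u : ℤ} (hu : |u| < p) : gramFun p u = 0 := by
  have hk : u.natAbs ∈ range p := mem_range.2 (by rw [← Int.natCast_natAbs] at hu; omega)
  rw [gramFun, prod_eq_zero hk (by simp [sq_abs]), mul_zero]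

theorem gramFun_neg (p : ℕ) (u : ℤ) : gramFun p (-u) = gramFun p u := by
  simp [gramFun]

theorem gramFun_natCast_add (p t : ℕ) :
    gramFun p (p + t) = (t + 2 * p).choose (2 * p) + (t + 2 * p - 1).choose (2 * p) := by
  have key := two_mul_ascFactorial_mul_ascFactorial t p
  rw [Nat.ascFactorial_eq_factorial_mul_choose t (2 * p),
    Nat.ascFactorial_eq_factorial_mul_choose' t (2 * p)] at key
  rw [gramFun, ← Int.cast_prod, prod_range_sq_sub_sq, Int.cast_natCast]
  field_simp
  rw [mul_add]
  exact_mod_cast key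

section Series

variable (R : Type*) [CommRing R]

noncomputable def gramSeries (p : ℕ) : R⟦X⟧ :=
  (1 + X) * mk fun n => ((2 * p + n).choose (2 * p) : R)

noncomputable def altSeries (p : ℕ) : R⟦X⟧ := rescale (-1) ((1 + X) ^ (2 * p + 1) * mk 1)

theorem gramSeries_mul_altSeries (p : ℕ) : gramSeries R p * altSeries R p = 1 := by
  have hinv : (1 + X : R⟦X⟧) * mk (fun n => (-1) ^ n) = 1 := by
    have h := congrArg (rescale (-1 : R)) (mk_one_mul_one_sub_eq_one R)
    rw [map_mul, map_sub, map_one, rescale_neg_one_X, rescale_mk, sub_neg_eq_add, mul_comm] at h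
    simpa using h
  have hchoose := mk_add_choose_mul_one_sub_pow_eq_one R (2 * p)
  rw [gramSeries, altSeries, map_mul, map_pow, map_add, map_one, rescale_neg_one_X, rescale_mk]
  simp only [Pi.one_apply, mul_one, ← sub_eq_add_neg]
  calc _ = ((1 + X) * mk fun n => (-1) ^ n) *
        ((mk fun n => ((2 * p + n).choose (2 * p) : R)) * (1 - X) ^ (2 * p + 1)) := by ring
    _ = 1 := by rw [hinv, hchoose, one_mul]

theorem coeff_altSeries (p s : ℕ) :
    coeff s (altSeries R p) = (-1) ^ s * ∑ j ∈ range (s + 1), ((2 * p + 1).choose j : R) := by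
  have hpow : (1 + X : R⟦X⟧) ^ (2 * p + 1) =
      ((1 + Polynomial.X) ^ (2 * p + 1) : Polynomial R).toPowerSeries := by
    simp
  rw [altSeries, coeff_rescale, coeff_mul, Nat.sum_antidiagonal_eq_sum_range_succ_mk, hpow]
  simp only [coeff_mk, Pi.one_apply, mul_one, Polynomial.coeff_coe,
    Polynomial.coeff_one_add_X_pow]

variable {R} in
theorem coeff_gramSeries {p : ℕ} (hp : 1 ≤ p) (t : ℕ) :
    coeff t (gramSeries R p) = (t + 2 * p).choose (2 * p) + (t + 2 * p - 1).choose (2 * p) := by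
  rcases t with _ | t
  · simp [gramSeries, Nat.choose_eq_zero_of_lt (show 2 * p - 1 < 2 * p by omega)]
  · rw [gramSeries, add_mul, one_mul, map_add, coeff_succ_X_mul, coeff_mk, coeff_mk,
      show t + 1 + 2 * p - 1 = 2 * p + t by omega, add_comm (t + 1), add_comm t]

end Series

section Vanishing

variable {R : Type*} [Semiring R] {p : ℕ} {g : ℤ → R} (hg : ∀ u : ℤ, |u| < p → g u = 0)
  (c : ℕ → R)
include hg

theorem sum_range_mul_apply_sub_sub {j : ℕ} (hj : 1 ≤ j) (hjp : j ≤ p) :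
    ∑ i ∈ range (2 * p + 1), c i * g (i - (p - j : ℕ)) =
      ∑ a ∈ range (j + 1), c (2 * p - (j - a)) * g (p + a) := by
  rw [show 2 * p + 1 = (2 * p - j) + (j + 1) by omega, sum_range_add,
    sum_eq_zero fun i hi => by
      rw [hg _ (abs_lt.2 ⟨by omega, by simp at hi; omega⟩), mul_zero], zero_add]
  refine sum_congr rfl fun a ha => ?_
  rw [mem_range] at ha
  rw [show 2 * p - j + a = 2 * p - (j - a) by omega,
    show ((2 * p - (j - a) : ℕ) : ℤ) - (p - j : ℕ) = p + a by omega]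

theorem sum_range_mul_apply_sub_add {j : ℕ} (hj : 1 ≤ j) (hjp : j ≤ p) :
    ∑ i ∈ range (2 * p + 1), c i * g (i - (p + j : ℕ)) =
      ∑ k ∈ range (j + 1), c k * g (k - (p + j : ℕ)) := by
  rw [show 2 * p + 1 = (j + 1) + (2 * p - j) by omega, sum_range_add,
    sum_eq_zero (s := range (2 * p - j)) fun i hi => by
      rw [hg _ (abs_lt.2 ⟨by omega, by simp at hi; omega⟩), mul_zero], add_zero]

theorem sum_range_mul_apply_sub_self (hp : 1 ≤ p) :
    ∑ i ∈ range (2 * p + 1), c i * g (i - p) = c 0 * g (-p) + c (2 * p) * g p := by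
  rw [sum_eq_add_of_mem 0 (2 * p) (by simp) (by simp) (by omega) fun i hi hi' => by
    rw [hg _ (abs_lt.2 ⟨by omega, by simp at hi; omega⟩), mul_zero]]
  rw [show ((2 * p : ℕ) : ℤ) - p = p by omega, Nat.cast_zero, zero_sub]

end Vanishing

theorem coeff_gramSeries_eq_gramFun {p : ℕ} (hp : 1 ≤ p) (t : ℕ) :
    coeff t (gramSeries ℚ p) = gramFun p (p + t) := by
  rw [coeff_gramSeries hp, gramFun_natCast_add]

theorem sum_range_mul_gramFun_sub_sub {p m : ℕ} (hp : 1 ≤ p) (hm : 1 ≤ m) (hmp : m ≤ p)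
    (c : ℕ → ℚ) :
    ∑ i ∈ range (2 * p + 1), c i * gramFun p (i - (p - m : ℕ)) =
      coeff m (gramSeries ℚ p * mk fun n => c (2 * p - n)) := by
  rw [sum_range_mul_apply_sub_sub (fun _ => gramFun_eq_zero) c hm hmp, coeff_mul,
    Nat.sum_antidiagonal_eq_sum_range_succ_mk]
  refine sum_congr rfl fun a _ => ?_
  rw [coeff_gramSeries_eq_gramFun hp, coeff_mk, mul_comm]

theorem sum_range_mul_gramFun_sub_add {p m : ℕ} (hp : 1 ≤ p) (hm : 1 ≤ m) (hmp : m ≤ p)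
    (c : ℕ → ℚ) :
    ∑ i ∈ range (2 * p + 1), c i * gramFun p (i - (p + m : ℕ)) =
      coeff m (mk c * gramSeries ℚ p) := by
  rw [sum_range_mul_apply_sub_add (fun _ => gramFun_eq_zero) c hm hmp, coeff_mul,
    Nat.sum_antidiagonal_eq_sum_range_succ_mk]
  refine sum_congr rfl fun k hk => ?_
  rw [mem_range] at hk
  rw [coeff_gramSeries_eq_gramFun hp, coeff_mk, ← gramFun_neg]
  congr 2
  omega

theorem gramFun_self {p : ℕ} (hp : 1 ≤ p) : gramFun p p = 1 := by
  simpa [Nat.choose_eq_zero_of_lt (show 2 * p - 1 < 2 * p by omega)] using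
    gramFun_natCast_add p 0

theorem sum_range_mul_gramFun_sub_self {p : ℕ} (hp : 1 ≤ p) (c : ℕ → ℚ) :
    ∑ i ∈ range (2 * p + 1), c i * gramFun p (i - p) = c 0 + c (2 * p) := by
  rw [sum_range_mul_apply_sub_self (fun _ => gramFun_eq_zero) c hp, gramFun_neg, gramFun_self hp,
    mul_one, mul_one]

def SolvesGramSystem (p : ℕ) (c : ℕ → ℚ) : Prop :=
  ∀ h ∈ range (2 * p), ∑ i ∈ range (2 * p + 1), c i * gramFun p (i - h) = 0

section System

variable {p : ℕ} (hp : 1 ≤ p) {c : ℕ → ℚ} (hc : c (2 * p) = 1)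
  (hsys : SolvesGramSystem p c)
include hp hc hsys

theorem SolvesGramSystem.coeff_mk_reverse_eq_altSeries :
    ∀ m ≤ p, coeff m (mk fun n => c (2 * p - n)) = coeff m (altSeries ℚ p) := by
  have hinv := gramSeries_mul_altSeries ℚ p
  refine coeff_eq_of_coeff_mul_eq (IsUnit.of_mul_eq_one _ hinv) fun m hm => ?_
  rw [hinv]
  rcases Nat.eq_zero_or_pos m with rfl | hm0
  · simp [gramSeries, hc]
  · rw [← sum_range_mul_gramFun_sub_sub hp hm0 hm, hsys _ (mem_range.2 (by omega)), coeff_one,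
      if_neg (by omega)]

theorem SolvesGramSystem.coeff_mk_eq_neg_altSeries :
    ∀ m ≤ p - 1, coeff m (mk c) = coeff m (-altSeries ℚ p) := by
  have hc0 : c 0 = -1 := by
    have h := hsys p (mem_range.2 (by omega))
    rw [sum_range_mul_gramFun_sub_self hp, hc] at h
    linarith
  have hinv := gramSeries_mul_altSeries ℚ p
  refine coeff_eq_of_coeff_mul_eq (IsUnit.of_mul_eq_one _ hinv) fun m hm => ?_
  rw [mul_neg, hinv]
  rcases Nat.eq_zero_or_pos m with rfl | hm0
  · simp [gramSeries, hc0]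
  · rw [mul_comm, ← sum_range_mul_gramFun_sub_add hp hm0 (by omega),
      hsys _ (mem_range.2 (by omega)), map_neg, coeff_one, if_neg (by omega), neg_zero]

end System

end Lusztig

open Lusztig

theorem stmt19 (p : ℕ) (hp : 1 ≤ p)
    (f : ℤ → ℚ)
    (hf : ∀ u : ℤ, f u = 2 / (Nat.factorial (2 * p)) *
      ∏ k ∈ Finset.range p, ((u ^ 2 - (k : ℤ) ^ 2 : ℤ) : ℚ))
    (c : ℕ → ℚ) (hc : c (2 * p) = 1)
    (hsys : ∀ h ∈ Finset.range (2 * p),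
      ∑ i ∈ Finset.range (2 * p + 1), c i * f ((i : ℤ) - (h : ℤ)) = 0) :
    (∀ i, i ≤ p - 1 →
      c i = (-1 : ℚ) ^ (i + 1) *
        ∑ j ∈ Finset.range (i + 1), (Nat.choose (2 * p + 1) j : ℚ)) ∧
    (∀ i, p ≤ i → i ≤ 2 * p →
      c i = (-1 : ℚ) ^ i *
        ∑ j ∈ Finset.range (2 * p - i + 1), (Nat.choose (2 * p + 1) j : ℚ)) := by
  obtain rfl : f = gramFun p := funext hf
  have hsol : SolvesGramSystem p c := hsys
  refine ⟨fun i hi => ?_, fun i hpi hi => ?_⟩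
  · rw [← coeff_mk i c, hsol.coeff_mk_eq_neg_altSeries hp hc i hi, map_neg, coeff_altSeries,
      pow_succ]
    ring
  · obtain ⟨m, rfl⟩ : ∃ m, i = 2 * p - m := ⟨2 * p - i, by omega⟩
    have h := hsol.coeff_mk_reverse_eq_altSeries hp hc m (by omega)
    rw [coeff_mk, coeff_altSeries] at h
    rw [h, show 2 * p - (2 * p - m) = m by omega, neg_one_pow_eq_pow_mod_two (n := 2 * p - m),
      neg_one_pow_eq_pow_mod_two (n := m), show (2 * p - m) % 2 = m % 2 by omega]
end
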